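/- arXiv:1709.10389 — 6 statements merged into one kernel-verified Lean document; each statement's English description precedes it below -/
import Mathlib

section
/- Any convex polygon in RP^2 with all vertices on the ideal boundary ∂H^2 having at least five vertices is strongly ideal, i.e., its interior is disjoint from ∂H^2. -/
/-!
In an affine chart `f = 1` the vertices are points of the light cone `x₀² + x₁² = x₂²`.
Suppose two of them lie on opposite nappes. With at least five vertices, three lie on one
nappe and one, `u`, on the other. Seen from `u`, the rays of the cone are parametrized by a
quadratic curve `t ↦ t² u + t b + c`, so the middle one of the three is a nonnegative
combination of the other two and of `u`; applying `f` makes this a convex combination, and that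
vertex is not extreme. Hence all vertices lie on one nappe, the polygon lies in the convex solid
half-cone over them, i.e. in the closed disk `kleinForm ≤ 0`, and no interior point of a subset
of the closed disk lies on its boundary circle.
-/

open Projectivization
open scoped LinearAlgebra.Projectivization

noncomputable section
open scoped Classical

/-- Topology on the real projective plane. -/
instance : TopologicalSpace (ℙ ℝ (Fin 3 → ℝ)) :=
  inferInstanceAs (TopologicalSpace (Quotient (projectivizationSetoid ℝ (Fin 3 → ℝ))))

/-- The affine-chart coordinates of a projective point, for the chart determined by the
linear functional `f`. -/
def chartPt (f : (Fin 3 → ℝ) →ₗ[ℝ] ℝ) (x : ℙ ℝ (Fin 3 → ℝ)) : Fin 3 → ℝ :=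
  (f x.rep)⁻¹ • x.rep

/-- `A` is contained in the affine chart determined by `f`. -/
def InChart (f : (Fin 3 → ℝ) →ₗ[ℝ] ℝ) (A : Set (ℙ ℝ (Fin 3 → ℝ))) : Prop :=
  ∀ x ∈ A, f x.rep ≠ 0

/-- The quadratic form `x₀² + x₁² - x₂²` defining the Klein model of `H²` in `ℝP²`. -/
def kleinForm (v : Fin 3 → ℝ) : ℝ := v 0 ^ 2 + v 1 ^ 2 - v 2 ^ 2

/-- The ideal boundary `∂H²`: the conic of the Klein model in `ℝP²`. -/
def idealBoundary : Set (ℙ ℝ (Fin 3 → ℝ)) := {x | kleinForm x.rep = 0}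

/-- The Klein model of the hyperbolic plane `H²` inside `ℝP²`. -/
def kleinH2 : Set (ℙ ℝ (Fin 3 → ℝ)) := {x | kleinForm x.rep < 0}

/-- `P` is a convex polygon in `ℝP²` with vertex set `Vs`: in some affine chart it is the
convex hull of the points of `Vs`, each of which is a genuine vertex (an extreme point). -/
def IsPolygon (P : Set (ℙ ℝ (Fin 3 → ℝ))) (Vs : Finset (ℙ ℝ (Fin 3 → ℝ))) : Prop :=
  ∃ f : (Fin 3 → ℝ) →ₗ[ℝ] ℝ, f ≠ 0 ∧ InChart f P ∧ (Vs : Set (ℙ ℝ (Fin 3 → ℝ))) ⊆ P ∧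
    chartPt f '' P = convexHull ℝ (chartPt f '' (Vs : Set (ℙ ℝ (Fin 3 → ℝ)))) ∧
    ∀ v ∈ Vs, chartPt f v ∉ convexHull ℝ (chartPt f '' ((Vs.erase v : Finset _) : Set (ℙ ℝ (Fin 3 → ℝ))))

open Topology

lemma Finset.exists_lt_lt_of_injOn {α β : Type*} [LinearOrder β] {T : Finset α} {t : α → β}
    (ht : Set.InjOn t T) (hT : 3 ≤ T.card) :
    ∃ a ∈ T, ∃ b ∈ T, ∃ c ∈ T, t a < t b ∧ t b < t c := by
  have hT₀ : T.Nonempty := Finset.card_pos.mp (by omega)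
  obtain ⟨a, ha, hmin⟩ := T.exists_min_image t hT₀
  obtain ⟨c, hc, hmax⟩ := T.exists_max_image t hT₀
  obtain ⟨b, hb⟩ : ((T.erase a).erase c).Nonempty := by
    rw [← Finset.card_pos]
    have := Finset.pred_card_le_card_erase (s := T) (a := a)
    have := Finset.pred_card_le_card_erase (s := T.erase a) (a := c)
    omega
  obtain ⟨hbc, hba, hb⟩ : b ≠ c ∧ b ≠ a ∧ b ∈ T := by simpa only [Finset.mem_erase] using hb
  exact ⟨a, ha, b, hb, c, hc, (hmin b hb).lt_of_ne fun h => hba (ht hb ha h.symm),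
    (hmax b hb).lt_of_ne fun h => hbc (ht hb hc h)⟩

lemma Convex.smul_add_smul_add_smul_mem {E : Type*} [AddCommGroup E] [Module ℝ E] {s : Set E}
    (hs : Convex ℝ s) {x y z : E} (hx : x ∈ s) (hy : y ∈ s) (hz : z ∈ s) {a b c : ℝ}
    (ha : 0 ≤ a) (hb : 0 ≤ b) (hc : 0 ≤ c) (habc : a + b + c = 1) :
    a • x + b • y + c • z ∈ s := by
  simpa [Fin.sum_univ_three] using hs.sum_mem (t := Finset.univ) (w := ![a, b, c])
    (z := ![x, y, z]) (by simp [Fin.forall_fin_succ, ha, hb, hc])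
    (by simp [Fin.sum_univ_three, habc]) (by simp [Fin.forall_fin_succ, hx, hy, hz])

-- The coefficient of `A` is `-z₂` times the convexity defect `(t₂ - t₁) (t₃ - t₂)` of `t ↦ t²`.
lemma exists_nonneg_smul_add_smul_add_smul_of_quadratic {M : Type*} [AddCommGroup M]
    [Module ℝ M] {A B C : M} {g : ℝ → M} (hg : ∀ t, g t = t ^ 2 • A + t • B + C)
    {t₁ t₂ t₃ z₁ z₂ z₃ : ℝ} (ht₁₂ : t₁ < t₂) (ht₂₃ : t₂ < t₃)
    (hz₁ : z₁ < 0) (hz₂ : z₂ < 0) (hz₃ : z₃ < 0) :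
    ∃ a b c : ℝ, 0 ≤ a ∧ 0 ≤ b ∧ 0 ≤ c ∧ z₂ • g t₂ = a • z₁ • g t₁ + b • z₃ • g t₃ + c • A := by
  have ht₁₃ : 0 < t₃ - t₁ := by linarith
  refine ⟨z₂ / z₁ * ((t₃ - t₂) / (t₃ - t₁)), z₂ / z₃ * ((t₂ - t₁) / (t₃ - t₁)),
    -z₂ * ((t₂ - t₁) * (t₃ - t₂)), ?_, ?_, ?_, ?_⟩
  · exact mul_nonneg (div_nonneg_of_nonpos hz₂.le hz₁.le) (div_nonneg (by linarith) ht₁₃.le)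
  · exact mul_nonneg (div_nonneg_of_nonpos hz₂.le hz₃.le) (div_nonneg (by linarith) ht₁₃.le)
  · exact mul_nonneg (neg_nonneg.mpr hz₂.le) (mul_nonneg (by linarith) (by linarith))
  · have := hz₁.ne
    have := hz₃.ne
    simp only [hg]
    match_scalars <;> field_simp <;> ring

lemma kleinForm_smul (c : ℝ) (w : Fin 3 → ℝ) : kleinForm (c • w) = c ^ 2 * kleinForm w := by
  simp only [kleinForm, Pi.smul_apply, smul_eq_mul]
  ring

lemma apply_two_ne_zero_of_kleinForm_eq_zero {w : Fin 3 → ℝ} (hw : kleinForm w = 0)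
    (hw₀ : w ≠ 0) : w 2 ≠ 0 := by
  intro hw₂
  unfold kleinForm at hw
  have h₀ : w 0 = 0 := by nlinarith [sq_nonneg (w 0), sq_nonneg (w 1)]
  have h₁ : w 1 = 0 := by nlinarith [sq_nonneg (w 0), sq_nonneg (w 1)]
  exact hw₀ (by ext i; fin_cases i <;> assumption)

lemma apply_two_ne_zero_of_map_eq_one {f : (Fin 3 → ℝ) →ₗ[ℝ] ℝ} {w : Fin 3 → ℝ}
    (hw : kleinForm w = 0) (hfw : f w = 1) : w 2 ≠ 0 :=
  apply_two_ne_zero_of_kleinForm_eq_zero hw fun h => by simp [h] at hfw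

lemma kleinForm_rep_mk_pos {v : Fin 3 → ℝ} (hv : v ≠ 0) (h : 0 < kleinForm v) :
    0 < kleinForm (mk ℝ v hv).rep := by
  obtain ⟨a, ha⟩ := exists_smul_eq_mk_rep ℝ v hv
  rw [← ha, Units.smul_def, kleinForm_smul]
  exact mul_pos (sq_pos_of_ne_zero a.ne_zero) h

lemma map_chartPt {f : (Fin 3 → ℝ) →ₗ[ℝ] ℝ} {x : ℙ ℝ (Fin 3 → ℝ)} (hx : f x.rep ≠ 0) :
    f (chartPt f x) = 1 := by
  simp [chartPt, hx]

lemma kleinForm_chartPt (f : (Fin 3 → ℝ) →ₗ[ℝ] ℝ) (x : ℙ ℝ (Fin 3 → ℝ)) :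
    kleinForm (chartPt f x) = (f x.rep)⁻¹ ^ 2 * kleinForm x.rep :=
  kleinForm_smul _ _

-- For null `q`, a quadratic parametrization of the rays of the light cone other than `ℝ q`,
-- which sits at `t = ∞`.
def lightConeCurve (q : Fin 3 → ℝ) (t : ℝ) : Fin 3 → ℝ :=
  t ^ 2 • q + t • ![-2 * q 1, 2 * q 0, 0] + ![-q 0, -q 1, q 2]

def lightConeParam (q p : Fin 3 → ℝ) : ℝ :=
  (q 0 * p 1 - q 1 * p 0) / (q 2 * p 2 - q 0 * p 0 - q 1 * p 1)

def lightConeScale (q p : Fin 3 → ℝ) : ℝ :=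
  (q 2 * p 2 - q 0 * p 0 - q 1 * p 1) / (2 * q 2 ^ 2)

lemma lightConeCurve_apply_two (q : Fin 3 → ℝ) (t : ℝ) :
    lightConeCurve q t 2 = (t ^ 2 + 1) * q 2 := by
  simp only [lightConeCurve, Pi.add_apply, Pi.smul_apply, smul_eq_mul, Fin.isValue,
    Matrix.cons_val, mul_zero, add_zero]
  ring

lemma eq_lightConeScale_smul_lightConeCurve {q p : Fin 3 → ℝ} (hq : kleinForm q = 0)
    (hp : kleinForm p = 0) (hq₂ : q 2 ≠ 0) (hs : lightConeScale q p ≠ 0) :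
    p = lightConeScale q p • lightConeCurve q (lightConeParam q p) := by
  have hD : q 2 * p 2 - q 0 * p 0 - q 1 * p 1 ≠ 0 := by simpa [lightConeScale, hq₂] using hs
  unfold lightConeScale lightConeParam lightConeCurve
  set D := q 2 * p 2 - q 0 * p 0 - q 1 * p 1
  set Y := q 0 * p 1 - q 1 * p 0
  have hcleared : (2 * q 2 ^ 2 * D) • p =
      Y ^ 2 • q + (Y * D) • ![-2 * q 1, 2 * q 0, 0] + D ^ 2 • ![-q 0, -q 1, q 2] := by
    unfold kleinForm at hq hp
    ext i
    fin_cases i <;>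
      simp only [Pi.add_apply, Pi.smul_apply, smul_eq_mul, Fin.isValue, Fin.zero_eta, Fin.mk_one,
        Fin.reduceFinMk, Matrix.cons_val_zero, Matrix.cons_val_one, Matrix.cons_val, neg_mul,
        mul_neg, mul_zero, add_zero, D, Y]
    · linear_combination -(q 0 * (q 0 ^ 2 + q 1 ^ 2)) * hp -
        (q 0 * p 2 ^ 2 + 2 * (q 2 * p 2 - q 0 * p 0 - q 1 * p 1) * p 0) * hq
    · linear_combination -(q 1 * (q 0 ^ 2 + q 1 ^ 2)) * hp -
        (q 1 * p 2 ^ 2 + 2 * (q 2 * p 2 - q 0 * p 0 - q 1 * p 1) * p 1) * hq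
    · linear_combination -(q 2 * (q 0 ^ 2 + q 1 ^ 2)) * hp - q 2 * p 2 ^ 2 * hq
  apply smul_right_injective _ (by positivity : 2 * q 2 ^ 2 * D ≠ 0)
  beta_reduce
  rw [hcleared]
  match_scalars <;> field_simp

lemma eq_smul_of_lightConeScale_eq_zero {q p : Fin 3 → ℝ} (hq : kleinForm q = 0)
    (hp : kleinForm p = 0) (hq₂ : q 2 ≠ 0) (hs : lightConeScale q p = 0) :
    p = (p 2 / q 2) • q := by
  have hD : q 0 * p 0 + q 1 * p 1 = q 2 * p 2 := by
    rw [lightConeScale, div_eq_zero_iff, or_iff_left (by positivity)] at hs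
    linarith
  unfold kleinForm at hq hp
  have hY : q 0 * p 1 - q 1 * p 0 = 0 := by
    refine pow_eq_zero_iff two_ne_zero |>.mp ?_
    linear_combination (q 0 ^ 2 + q 1 ^ 2) * hp + p 2 ^ 2 * hq -
      (q 0 * p 0 + q 1 * p 1 + q 2 * p 2) * hD
  ext i
  fin_cases i <;> simp only [Pi.smul_apply, smul_eq_mul, Fin.isValue, Fin.zero_eta, Fin.mk_one,
    Fin.reduceFinMk] <;> field_simp <;> apply mul_left_cancel₀ hq₂
  · linear_combination -p 0 * hq + q 0 * hD - q 1 * hY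
  · linear_combination -p 1 * hq + q 1 * hD + q 0 * hY

lemma lightConeScale_neg {f : (Fin 3 → ℝ) →ₗ[ℝ] ℝ} {q x : Fin 3 → ℝ} (hq : kleinForm q = 0)
    (hx : kleinForm x = 0) (hfq : f q = 1) (hfx : f x = 1) (hxq : x 2 * q 2 < 0) :
    lightConeScale q x < 0 := by
  have hq₂ : q 2 ≠ 0 := right_ne_zero_of_mul hxq.ne
  have hs : lightConeScale q x ≠ 0 := by
    intro hs
    have hxq' := eq_smul_of_lightConeScale_eq_zero hq hx hq₂ hs
    have hcoef : x 2 / q 2 = 1 := by simpa [hfq, hfx] using (congrArg f hxq').symm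
    rw [hcoef, one_smul] at hxq'
    rw [hxq'] at hxq
    exact (mul_self_nonneg _).not_gt hxq
  have h₂ := congrFun (eq_lightConeScale_smul_lightConeCurve hq hx hq₂ hs) 2
  rw [Pi.smul_apply, lightConeCurve_apply_two, smul_eq_mul] at h₂
  rw [h₂] at hxq
  by_contra! h
  nlinarith [mul_nonneg h (by positivity : 0 ≤ (lightConeParam q x ^ 2 + 1) * q 2 ^ 2)]

lemma eq_of_lightConeParam_eq {f : (Fin 3 → ℝ) →ₗ[ℝ] ℝ} {q x y : Fin 3 → ℝ}
    (hq : kleinForm q = 0) (hq₂ : q 2 ≠ 0) (hx : kleinForm x = 0) (hy : kleinForm y = 0)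
    (hfx : f x = 1) (hfy : f y = 1) (hsx : lightConeScale q x ≠ 0)
    (hsy : lightConeScale q y ≠ 0) (hxy : lightConeParam q x = lightConeParam q y) : x = y := by
  have hprop : x = (lightConeScale q x / lightConeScale q y) • y :=
    calc x = lightConeScale q x • lightConeCurve q (lightConeParam q y) :=
          hxy ▸ eq_lightConeScale_smul_lightConeCurve hq hx hq₂ hsx
      _ = (lightConeScale q x / lightConeScale q y) •
          lightConeScale q y • lightConeCurve q (lightConeParam q y) := by
        rw [smul_smul, div_mul_cancel₀ _ hsy]
      _ = _ := congrArg _ (eq_lightConeScale_smul_lightConeCurve hq hy hq₂ hsy).symm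
  have hcoef : lightConeScale q x / lightConeScale q y = 1 := by
    simpa [hfx, hfy] using (congrArg f hprop).symm
  rwa [hcoef, one_smul] at hprop

section ConvexPosition

variable {ι : Type*} {Vs : Finset ι} {p : ι → Fin 3 → ℝ}

lemma injOn_of_forall_notMem_convexHull_erase
    (hext : ∀ v ∈ Vs, p v ∉ convexHull ℝ (p '' ↑(Vs.erase v))) : Set.InjOn p Vs := by
  intro v hv w hw hvw
  by_contra hne
  exact hext v hv (subset_convexHull ℝ _ ⟨w, by simpa [Ne.symm hne] using hw, hvw.symm⟩)

lemma false_of_three_le_card_opposite (f : (Fin 3 → ℝ) →ₗ[ℝ] ℝ)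
    (hf : ∀ v ∈ Vs, f (p v) = 1) (hnull : ∀ v ∈ Vs, kleinForm (p v) = 0)
    (hext : ∀ v ∈ Vs, p v ∉ convexHull ℝ (p '' ↑(Vs.erase v))) {T : Finset ι} (hTV : T ⊆ Vs)
    (hT : 3 ≤ T.card) {u : ι} (hu : u ∈ Vs) (hopp : ∀ v ∈ T, p v 2 * p u 2 < 0) : False := by
  set q := p u
  have hq₂ : q 2 ≠ 0 := apply_two_ne_zero_of_map_eq_one (hnull u hu) (hf u hu)
  have hneg (v) (hv : v ∈ T) : lightConeScale q (p v) < 0 :=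
    lightConeScale_neg (hnull u hu) (hnull v (hTV hv)) (hf u hu) (hf v (hTV hv)) (hopp v hv)
  have hdecomp (v) (hv : v ∈ T) :
      p v = lightConeScale q (p v) • lightConeCurve q (lightConeParam q (p v)) :=
    eq_lightConeScale_smul_lightConeCurve (hnull u hu) (hnull v (hTV hv)) hq₂ (hneg v hv).ne
  have hinj : Set.InjOn (fun v => lightConeParam q (p v)) T := fun v hv w hw hvw =>
    injOn_of_forall_notMem_convexHull_erase hext (hTV hv) (hTV hw) <|
      eq_of_lightConeParam_eq (hnull u hu) hq₂ (hnull v (hTV hv)) (hnull w (hTV hw))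
        (hf v (hTV hv)) (hf w (hTV hw)) (hneg v hv).ne (hneg w hw).ne hvw
  obtain ⟨a, ha, b, hb, c, hc, hab, hbc⟩ := Finset.exists_lt_lt_of_injOn hinj hT
  obtain ⟨α, β, γ, hα, hβ, hγ, hcomb⟩ := exists_nonneg_smul_add_smul_add_smul_of_quadratic
    (g := lightConeCurve q) (fun _ => rfl) hab hbc (hneg a ha) (hneg b hb) (hneg c hc)
  rw [← hdecomp a ha, ← hdecomp b hb, ← hdecomp c hc] at hcomb
  have hsum : α + β + γ = 1 := by
    simpa [hf a (hTV ha), hf b (hTV hb), hf c (hTV hc), show f q = 1 from hf u hu]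
      using (congrArg f hcomb).symm
  have hmem (v) (hv : v ∈ Vs) (hvb : v ≠ b) : p v ∈ convexHull ℝ (p '' ↑(Vs.erase b)) :=
    subset_convexHull ℝ _ ⟨v, by simpa [hvb] using hv, rfl⟩
  refine hext b (hTV hb) (hcomb ▸ (convex_convexHull ℝ _).smul_add_smul_add_smul_mem
    (hmem a (hTV ha) ?_) (hmem c (hTV hc) ?_) (hmem u hu ?_) hα hβ hγ hsum)
  · exact fun h => hab.ne (by rw [h])
  · exact fun h => hbc.ne (by rw [h])
  · rintro rfl
    exact (mul_self_nonneg _).not_gt (hopp u hb)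

lemma mul_pos_of_five_le_card (f : (Fin 3 → ℝ) →ₗ[ℝ] ℝ)
    (hf : ∀ v ∈ Vs, f (p v) = 1) (hnull : ∀ v ∈ Vs, kleinForm (p v) = 0)
    (hext : ∀ v ∈ Vs, p v ∉ convexHull ℝ (p '' ↑(Vs.erase v))) (hcard : 5 ≤ Vs.card)
    {v w : ι} (hv : v ∈ Vs) (hw : w ∈ Vs) : 0 < p v 2 * p w 2 := by
  have hne (x) (hx : x ∈ Vs) : p x 2 ≠ 0 := apply_two_ne_zero_of_map_eq_one (hnull x hx) (hf x hx)
  by_contra! hvw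
  replace hvw := hvw.lt_of_ne (mul_ne_zero (hne v hv) (hne w hw))
  set S := Vs.filter fun x => p x 2 * p w 2 < 0
  set S' := Vs.filter fun x => p x 2 * p v 2 < 0
  have hcover : Vs ⊆ S ∪ S' := by
    intro x hx
    simp only [S, S', Finset.mem_union, Finset.mem_filter, hx, true_and]
    by_contra! h
    nlinarith [mul_nonneg h.1 h.2, mul_neg_of_pos_of_neg (sq_pos_of_ne_zero (hne x hx)) hvw]
  have : 3 ≤ S.card ∨ 3 ≤ S'.card := by
    have := (Finset.card_le_card hcover).trans (Finset.card_union_le S S')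
    omega
  rcases this with hS | hS
  · exact false_of_three_le_card_opposite f hf hnull hext (Finset.filter_subset _ _) hS hw
      fun x hx => (Finset.mem_filter.mp hx).2
  · exact false_of_three_le_card_opposite f hf hnull hext (Finset.filter_subset _ _) hS hv
      fun x hx => (Finset.mem_filter.mp hx).2

end ConvexPosition

lemma add_mul_le_mul_of_kleinForm_nonpos {x y : Fin 3 → ℝ} (hx : kleinForm x ≤ 0)
    (hy : kleinForm y ≤ 0) (hxy : 0 ≤ x 2 * y 2) : x 0 * y 0 + x 1 * y 1 ≤ x 2 * y 2 := by
  unfold kleinForm at hx hy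
  have hsq : (x 0 * y 0 + x 1 * y 1) ^ 2 ≤ (x 2 * y 2) ^ 2 := by
    have : (x 0 ^ 2 + x 1 ^ 2) * (y 0 ^ 2 + y 1 ^ 2) ≤ x 2 ^ 2 * y 2 ^ 2 :=
      mul_le_mul (by linarith) (by linarith) (by positivity) (by positivity)
    nlinarith [sq_nonneg (x 0 * y 1 - x 1 * y 0)]
  exact (abs_le_of_sq_le_sq' hsq hxy).2

lemma convex_solidLightCone {e : ℝ} (he : e ≠ 0) :
    Convex ℝ {w : Fin 3 → ℝ | kleinForm w ≤ 0 ∧ 0 ≤ e * w 2} := by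
  rintro x ⟨hx, hex⟩ y ⟨hy, hey⟩ a b ha hb -
  have hxy : 0 ≤ x 2 * y 2 :=
    nonneg_of_mul_nonneg_right (a := e ^ 2) (by nlinarith [mul_nonneg hex hey]) (by positivity)
  have hcross := add_mul_le_mul_of_kleinForm_nonpos hx hy hxy
  constructor
  · have hexpand : kleinForm (a • x + b • y) = a ^ 2 * kleinForm x + b ^ 2 * kleinForm y +
        2 * (a * b) * (x 0 * y 0 + x 1 * y 1 - x 2 * y 2) := by
      simp only [kleinForm, Pi.add_apply, Pi.smul_apply, smul_eq_mul]
      ring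
    rw [hexpand]
    have : 0 ≤ a * b := mul_nonneg ha hb
    nlinarith
  · simp only [Pi.add_apply, Pi.smul_apply, smul_eq_mul]
    nlinarith

-- Push a representative radially outwards: `w + s • (w₀, w₁, 0)` with `s ↓ 0`.
lemma idealBoundary_subset_closure_kleinForm_pos :
    idealBoundary ⊆ closure {y : ℙ ℝ (Fin 3 → ℝ) | 0 < kleinForm y.rep} := by
  intro x hx
  set w := x.rep
  have hw₂ : w 2 ≠ 0 := apply_two_ne_zero_of_kleinForm_eq_zero hx x.rep_nonzero
  set u : Fin 3 → ℝ := ![w 0, w 1, 0]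
  have hne (s : ℝ) : w + s • u ≠ 0 := fun h => hw₂ (by simpa [u] using congrFun h 2)
  have hcont : Continuous fun s : ℝ => mk ℝ (w + s • u) (hne s) :=
    continuous_quotient_mk'.comp
      ((continuous_const.add (continuous_id.smul continuous_const)).subtype_mk _)
  have hlim : Filter.Tendsto (fun s : ℝ => mk ℝ (w + s • u) (hne s)) (𝓝[>] 0) (𝓝 x) := by
    simpa [w] using (hcont.tendsto 0).mono_left (nhdsWithin_le_nhds (s := Set.Ioi 0))
  refine mem_closure_of_tendsto hlim (eventually_nhdsWithin_of_forall fun s (hs : 0 < s) => ?_)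
  apply kleinForm_rep_mk_pos
  have hk : kleinForm (w + s • u) = ((1 + s) ^ 2 - 1) * w 2 ^ 2 := by
    have hw : kleinForm w = 0 := hx
    unfold kleinForm at hw ⊢
    simp only [Pi.add_apply, Pi.smul_apply, smul_eq_mul, u, Fin.isValue, Matrix.cons_val_zero,
      Matrix.cons_val_one, Matrix.cons_val, mul_zero, add_zero]
    linear_combination (1 + s) ^ 2 * hw
  rw [hk]
  have : 0 < (1 + s) ^ 2 - 1 := by nlinarith
  positivity

lemma IsPolygon.kleinForm_rep_nonpos {P : Set (ℙ ℝ (Fin 3 → ℝ))}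
    {Vs : Finset (ℙ ℝ (Fin 3 → ℝ))} (hP : IsPolygon P Vs)
    (hV : (Vs : Set (ℙ ℝ (Fin 3 → ℝ))) ⊆ idealBoundary) (hcard : 5 ≤ Vs.card)
    {y : ℙ ℝ (Fin 3 → ℝ)} (hy : y ∈ P) : kleinForm y.rep ≤ 0 := by
  obtain ⟨f, -, hchart, hVsP, himg, hext⟩ := hP
  have hf (v) (hv : v ∈ Vs) : f (chartPt f v) = 1 := map_chartPt (hchart v (hVsP hv))
  have hnull (v) (hv : v ∈ Vs) : kleinForm (chartPt f v) = 0 := by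
    rw [kleinForm_chartPt, show kleinForm v.rep = 0 from hV hv, mul_zero]
  obtain ⟨v₀, hv₀⟩ := Finset.card_pos.mp (by omega : 0 < Vs.card)
  have hcone : convexHull ℝ (chartPt f '' Vs) ⊆
      {w | kleinForm w ≤ 0 ∧ 0 ≤ chartPt f v₀ 2 * w 2} := by
    refine convexHull_min ?_ <| convex_solidLightCone <|
      apply_two_ne_zero_of_map_eq_one (hnull v₀ hv₀) (hf v₀ hv₀)
    rintro _ ⟨v, hv, rfl⟩
    exact ⟨(hnull v hv).le, (mul_pos_of_five_le_card f hf hnull hext hcard hv₀ hv).le⟩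
  have hy' : kleinForm (chartPt f y) ≤ 0 := (hcone (himg ▸ ⟨y, hy, rfl⟩)).1
  rw [kleinForm_chartPt] at hy'
  have := hchart y hy
  exact nonpos_of_mul_nonpos_right hy' (by positivity)

/-- A convex polygon in `ℝP²` with all vertices on the ideal boundary
`∂H²` and at least five vertices is strongly ideal: its interior is disjoint from `∂H²`. -/
theorem ideal_polygon_five_vertices_strongly_ideal
    (P : Set (ℙ ℝ (Fin 3 → ℝ))) (Vs : Finset (ℙ ℝ (Fin 3 → ℝ)))
    (hP : IsPolygon P Vs) (hV : (Vs : Set (ℙ ℝ (Fin 3 → ℝ))) ⊆ idealBoundary)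
    (hcard : 5 ≤ Vs.card) :
    interior P ∩ idealBoundary = ∅ := by
  refine Set.eq_empty_iff_forall_notMem.mpr fun x ⟨hxP, hx⟩ => ?_
  obtain ⟨y, hyP, hy⟩ := mem_closure_iff.mp (idealBoundary_subset_closure_kleinForm_pos hx) _
    isOpen_interior hxP
  exact hy.not_ge (hP.kleinForm_rep_nonpos hV hcard (interior_subset hyP))
end
end

section
/- A weakly ideal convex polygon in RP^2 (all vertices on the conic ∂H^2, interior meeting ∂H^2) has either three or four vertices, with at most two vertices lying in the closure of each connected component of its intersection with H^2. -/
open Projectivization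
open scoped LinearAlgebra.Projectivization

noncomputable section
open scoped Classical

/-! ### Auxiliary material for the proof -/

abbrev V3 := Fin 3 → ℝ

namespace WeaklyIdealAux

open Real

/-! #### Generalities -/

lemma pos_of_sq_mul {a b : ℝ} (h : 0 < a^2 * b) : 0 < b := by
  by_contra hb
  push_neg at hb
  nlinarith [sq_nonneg a]

lemma div_pos_of_mul_pos {a b : ℝ} (h : 0 < a * b) : 0 < a / b := by
  rcases mul_pos_iff.1 h with ⟨ha, hb⟩ | ⟨ha, hb⟩
  · exact div_pos ha hb
  · exact div_pos_of_neg_of_neg ha hb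

lemma sumsq_pos {u : V3} (hu : u ≠ 0) : 0 < u 0^2 + u 1^2 + u 2^2 := by
  rcases lt_or_eq_of_le (by positivity : (0:ℝ) ≤ u 0^2 + u 1^2 + u 2^2) with h | h
  · exact h
  · exfalso; apply hu
    have h0 : u 0 = 0 := by
      have : u 0^2 = 0 := by nlinarith [sq_nonneg (u 0), sq_nonneg (u 1), sq_nonneg (u 2)]
      exact pow_eq_zero_iff two_ne_zero |>.mp this
    have h1 : u 1 = 0 := by
      have : u 1^2 = 0 := by nlinarith [sq_nonneg (u 0), sq_nonneg (u 1), sq_nonneg (u 2)]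
      exact pow_eq_zero_iff two_ne_zero |>.mp this
    have h2 : u 2 = 0 := by
      have : u 2^2 = 0 := by nlinarith [sq_nonneg (u 0), sq_nonneg (u 1), sq_nonneg (u 2)]
      exact pow_eq_zero_iff two_ne_zero |>.mp this
    funext i
    fin_cases i
    · exact h0
    · exact h1
    · exact h2

/-! #### Chart lemmas -/

variable (f : V3 →ₗ[ℝ] ℝ)

lemma f_chartPt {x : ℙ ℝ V3} (hx : f x.rep ≠ 0) : f (chartPt f x) = 1 := by
  simp [chartPt, map_smul, inv_mul_cancel₀ hx]

lemma chartPt_ne_zero {x : ℙ ℝ V3} (hx : f x.rep ≠ 0) : chartPt f x ≠ 0 := by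
  intro h
  have := f_chartPt f hx
  rw [h] at this
  simp at this

lemma mk_chartPt {x : ℙ ℝ V3} (hx : f x.rep ≠ 0) :
    Projectivization.mk ℝ (chartPt f x) (chartPt_ne_zero f hx) = x := by
  conv_rhs => rw [← x.mk_rep]
  rw [Projectivization.mk_eq_mk_iff]
  exact ⟨Units.mk0 _ (inv_ne_zero hx), rfl⟩

lemma chartPt_mk {u : V3} (hu : f u = 1) (hu0 : u ≠ 0) :
    chartPt f (Projectivization.mk ℝ u hu0) = u := by
  obtain ⟨a, ha⟩ := Projectivization.exists_smul_eq_mk_rep ℝ u hu0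
  have ha' : (a : ℝ) ≠ 0 := a.ne_zero
  rw [chartPt, ← ha]
  have h1 : ((a : ℝˣ) • u : V3) = (a : ℝ) • u := rfl
  rw [h1, map_smul, smul_eq_mul, hu, mul_one, smul_smul, inv_mul_cancel₀ ha', one_smul]

/-- The ball transfer lemma: around an interior point of `P`, a whole ball of the affine
chart plane is contained in the chart image of `P`. -/
lemma ball_lemma {P : Set (ℙ ℝ V3)} (hchart : InChart f P) {w : ℙ ℝ V3}
    (hw : w ∈ interior P) :
    ∃ ε > 0, ∀ u : V3, f u = 1 → ‖u - chartPt f w‖ < ε → u ∈ chartPt f '' P := by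
  have hwP : w ∈ P := interior_subset hw
  have hfw : f w.rep ≠ 0 := hchart w hwP
  set p := chartPt f w with hp
  have hp0 : p ≠ 0 := chartPt_ne_zero f hfw
  have hcont : Continuous (Projectivization.mk' ℝ : {v : V3 // v ≠ 0} → ℙ ℝ V3) :=
    continuous_quotient_mk'
  have hopen : IsOpen ((Projectivization.mk' ℝ : {v : V3 // v ≠ 0} → ℙ ℝ V3) ⁻¹' interior P) :=
    isOpen_interior.preimage hcont
  rw [isOpen_induced_iff] at hopen
  obtain ⟨U, hU, hUeq⟩ := hopen
  have hpU : p ∈ U := by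
    have : (⟨p, hp0⟩ : {v : V3 // v ≠ 0}) ∈ (Subtype.val ⁻¹' U) := by
      rw [hUeq]
      show Projectivization.mk' ℝ ⟨p, hp0⟩ ∈ interior P
      rw [Projectivization.mk'_eq_mk]
      rw [mk_chartPt f hfw]
      exact hw
    exact this
  obtain ⟨ε, hε, hball⟩ := Metric.isOpen_iff.1 hU p hpU
  refine ⟨ε, hε, fun u hfu hdist => ?_⟩
  have hu0 : u ≠ 0 := by
    intro h; rw [h] at hfu; simp at hfu
  have huU : u ∈ U := hball (by rwa [Metric.mem_ball, dist_eq_norm])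
  have : Projectivization.mk' ℝ ⟨u, hu0⟩ ∈ interior P := by
    have : (⟨u, hu0⟩ : {v : V3 // v ≠ 0}) ∈ (Subtype.val ⁻¹' U) := huU
    rw [hUeq] at this
    exact this
  rw [Projectivization.mk'_eq_mk] at this
  exact ⟨Projectivization.mk ℝ u hu0, interior_subset this, chartPt_mk f hfu hu0⟩

/-! #### Trigonometric and determinant lemmas -/

lemma circle_angle {X Y : ℝ} (h : X^2 + Y^2 = 1) :
    ∃ θ, 0 ≤ θ ∧ θ < 2*π ∧ Real.cos θ = X ∧ Real.sin θ = Y := by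
  have hX1 : -1 ≤ X := by nlinarith [sq_nonneg Y]
  have hX2 : X ≤ 1 := by nlinarith [sq_nonneg Y]
  have hsq : Real.sqrt (1 - X^2) = |Y| := by
    rw [show 1 - X^2 = Y^2 by linarith, Real.sqrt_sq_eq_abs]
  rcases le_or_gt 0 Y with hY | hY
  · refine ⟨Real.arccos X, Real.arccos_nonneg X, ?_, Real.cos_arccos hX1 hX2, ?_⟩
    · calc Real.arccos X ≤ π := Real.arccos_le_pi X
        _ < 2*π := by nlinarith [Real.pi_pos]
    · rw [Real.sin_arccos, hsq, abs_of_nonneg hY]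
  · refine ⟨2*π - Real.arccos X, ?_, ?_, ?_, ?_⟩
    · nlinarith [Real.arccos_le_pi X, Real.pi_pos]
    · have hXlt : X < 1 := by
        rcases lt_or_eq_of_le hX2 with h' | h'
        · exact h'
        · exfalso; rw [h'] at h; nlinarith
      have := Real.arccos_pos.mpr hXlt
      linarith
    · rw [Real.cos_sub, Real.cos_two_pi, Real.sin_two_pi]
      simp [Real.cos_arccos hX1 hX2]
    · rw [Real.sin_sub, Real.cos_two_pi, Real.sin_two_pi]
      rw [Real.sin_arccos, hsq, abs_of_neg hY]
      ring

lemma sin_ident (x y : ℝ) :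
    Real.sin x + Real.sin y - Real.sin (x+y) =
      4 * Real.sin (x/2) * Real.sin (y/2) * Real.sin ((x+y)/2) := by
  have hx : Real.sin x = 2 * Real.sin (x/2) * Real.cos (x/2) := by
    rw [← Real.sin_two_mul]; ring_nf
  have hy : Real.sin y = 2 * Real.sin (y/2) * Real.cos (y/2) := by
    rw [← Real.sin_two_mul]; ring_nf
  have hxy : Real.sin (x+y) = 2 * Real.sin ((x+y)/2) * Real.cos ((x+y)/2) := by
    rw [← Real.sin_two_mul]; ring_nf
  have h2 : Real.sin ((x+y)/2) = Real.sin (x/2) * Real.cos (y/2) + Real.cos (x/2) * Real.sin (y/2) := by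
    rw [show (x+y)/2 = x/2 + y/2 by ring, Real.sin_add]
  have h3 : Real.cos ((x+y)/2) = Real.cos (x/2) * Real.cos (y/2) - Real.sin (x/2) * Real.sin (y/2) := by
    rw [show (x+y)/2 = x/2 + y/2 by ring, Real.cos_add]
  rw [hx, hy, hxy, h2, h3]
  have p1 := Real.sin_sq_add_cos_sq (x/2)
  have p2 := Real.sin_sq_add_cos_sq (y/2)
  linear_combination (-2*Real.sin (x/2)*Real.cos (x/2)) * p2 + (-2*Real.sin (y/2)*Real.cos (y/2)) * p1

/-- The determinant of the three points of the unit circle at angles `a`, `b`, `c`. -/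
def detD (a b c : ℝ) : ℝ := Real.sin (b-a) + Real.sin (c-b) - Real.sin (c-a)

lemma detD_pos {a b c : ℝ} (hab : a < b) (hbc : b < c) (hca : c - a < 2*π) :
    0 < detD a b c := by
  have h : detD a b c = 4 * Real.sin ((b-a)/2) * Real.sin ((c-b)/2) * Real.sin ((c-a)/2) := by
    rw [detD, show c - a = (b-a) + (c-b) by ring, sin_ident]
  rw [h]
  have h1 : 0 < Real.sin ((b-a)/2) := Real.sin_pos_of_pos_of_lt_pi (by linarith) (by nlinarith)
  have h2 : 0 < Real.sin ((c-b)/2) := Real.sin_pos_of_pos_of_lt_pi (by linarith) (by nlinarith)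
  have h3 : 0 < Real.sin ((c-a)/2) := Real.sin_pos_of_pos_of_lt_pi (by linarith) (by nlinarith)
  positivity

/-- The point of the unit circle (in the plane `z = 1`) at angle `θ`. -/
def circ (θ : ℝ) : V3 := ![Real.cos θ, Real.sin θ, 1]

/-- The Cramer dependence between any four points of the circle. -/
lemma cramer (θ1 θ2 θ3 θ4 : ℝ) :
    detD θ2 θ3 θ4 • circ θ1 + detD θ1 θ2 θ4 • circ θ3 =
      detD θ1 θ3 θ4 • circ θ2 + detD θ1 θ2 θ3 • circ θ4 := by
  funext i
  simp only [Pi.add_apply, Pi.smul_apply, smul_eq_mul, detD, circ, Real.sin_sub]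
  fin_cases i <;>
    simp [Matrix.cons_val_zero, Matrix.cons_val_one, Matrix.head_cons] <;> ring

/-! #### Quadratic-form lemmas -/

/-- The polar bilinear form of `kleinForm`. -/
def bform (u v : V3) : ℝ := u 0 * v 0 + u 1 * v 1 - u 2 * v 2

lemma kleinForm_smul (c : ℝ) (u : V3) : kleinForm (c • u) = c^2 * kleinForm u := by
  simp only [kleinForm, Pi.smul_apply, smul_eq_mul]; ring

lemma kleinForm_add_smul (x e : V3) (c : ℝ) :
    kleinForm (x + c • e) = kleinForm x + 2*c*bform x e + c^2 * kleinForm e := by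
  simp only [kleinForm, bform, Pi.add_apply, Pi.smul_apply, smul_eq_mul]
  ring

lemma bform_smul (a b : ℝ) (u v : V3) : bform (a • u) (b • v) = (a*b) * bform u v := by
  simp only [bform, Pi.smul_apply, smul_eq_mul]; ring

lemma bform_circ_nonpos (θ1 θ2 : ℝ) : bform (circ θ1) (circ θ2) ≤ 0 := by
  simp only [bform, circ, Matrix.cons_val_zero, Matrix.cons_val_one, Matrix.head_cons,
    Matrix.cons_val_two, Matrix.tail_cons]
  nlinarith [sq_nonneg (Real.cos θ1 - Real.cos θ2), sq_nonneg (Real.sin θ1 - Real.sin θ2),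
    Real.sin_sq_add_cos_sq θ1, Real.sin_sq_add_cos_sq θ2]

lemma kleinForm_combo (T : Finset V3) (W : V3 → ℝ)
    (hT : ∀ y ∈ T, ∀ z ∈ T, bform y z ≤ 0) (hW : ∀ y ∈ T, 0 ≤ W y) :
    kleinForm (∑ y ∈ T, W y • y) ≤ 0 := by
  have expand : kleinForm (∑ y ∈ T, W y • y) = ∑ y ∈ T, ∑ z ∈ T, (W y * W z) * bform y z := by
    simp only [kleinForm, bform, Finset.sum_apply, Pi.smul_apply, smul_eq_mul]
    rw [sq, sq, sq, Finset.sum_mul_sum, Finset.sum_mul_sum, Finset.sum_mul_sum]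
    rw [← Finset.sum_add_distrib, ← Finset.sum_sub_distrib]
    apply Finset.sum_congr rfl
    intro y _
    rw [← Finset.sum_add_distrib, ← Finset.sum_sub_distrib]
    apply Finset.sum_congr rfl
    intro z _
    ring
  rw [expand]
  apply Finset.sum_nonpos
  intro y hy
  apply Finset.sum_nonpos
  intro z hz
  exact mul_nonpos_of_nonneg_of_nonpos (mul_nonneg (hW y hy) (hW z hz)) (hT y hy z hz)

/-! #### Directions in the kernel of `f` -/

lemma f_sum (u : V3) :
    f u = u 0 * f (fun j => if 0 = j then 1 else 0) + u 1 * f (fun j => if 1 = j then 1 else 0)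
      + u 2 * f (fun j => if 2 = j then 1 else 0) := by
  have := LinearMap.pi_apply_eq_sum_univ f u
  rw [this, Fin.sum_univ_three]
  simp [smul_eq_mul]

lemma exists_pos_dir : ∃ e : V3, f e = 0 ∧ 0 < kleinForm e := by
  set a0 := f (fun j => if 0 = j then 1 else 0) with ha0
  set a1 := f (fun j => if 1 = j then 1 else 0) with ha1
  set a2 := f (fun j => if 2 = j then 1 else 0) with ha2
  by_cases h : a0 = 0 ∧ a1 = 0
  · refine ⟨![1, 0, 0], ?_, ?_⟩
    · rw [f_sum]
      simp [← ha0, ← ha1, ← ha2, h.1]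
    · norm_num [kleinForm, show (![1, 0, 0] : V3) 2 = 0 from rfl]
  · refine ⟨![a1, -a0, 0], ?_, ?_⟩
    · rw [f_sum]
      simp only [Matrix.cons_val_zero, Matrix.cons_val_one, Matrix.head_cons, ← ha0, ← ha1, ← ha2,
        show (![a1, -a0, 0] : V3) 2 = 0 from rfl]
      norm_num
      ring
    · simp only [kleinForm, Matrix.cons_val_zero, Matrix.cons_val_one, Matrix.head_cons,
        show (![a1, -a0, 0] : V3) 2 = 0 from rfl]
      rcases not_and_or.1 h with h' | h'
      · norm_num; positivity
      · norm_num; positivity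

lemma exists_two_dirs (hf0 : f ≠ 0) :
    ∃ e1 e2 : V3, f e1 = 0 ∧ f e2 = 0 ∧ e1 ≠ 0 ∧ ∀ r : ℝ, r • e1 ≠ e2 := by
  set a0 := f (fun j => if 0 = j then 1 else 0) with ha0
  set a1 := f (fun j => if 1 = j then 1 else 0) with ha1
  set a2 := f (fun j => if 2 = j then 1 else 0) with ha2
  have hex : ¬(a0 = 0 ∧ a1 = 0 ∧ a2 = 0) := by
    rintro ⟨h0, h1, h2⟩
    apply hf0
    apply LinearMap.ext
    intro u
    rw [f_sum, ← ha0, ← ha1, ← ha2, h0, h1, h2]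
    simp
  by_cases h2 : a2 ≠ 0
  · refine ⟨![a2, 0, -a0], ![0, a2, -a1], ?_, ?_, ?_, ?_⟩
    · rw [f_sum]; simp [← ha0, ← ha1, ← ha2]; ring
    · rw [f_sum]; simp [← ha0, ← ha1, ← ha2]; ring
    · intro h; have := congrFun h 0; simp at this; exact h2 this
    · intro r h
      have h1 := congrFun h 1
      simp at h1
      exact h2 h1.symm
  push_neg at h2
  by_cases h1 : a1 ≠ 0
  · refine ⟨![a1, -a0, 0], ![0, -a2, a1], ?_, ?_, ?_, ?_⟩
    · rw [f_sum]; simp [← ha0, ← ha1, ← ha2]; ring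
    · rw [f_sum]; simp [← ha0, ← ha1, ← ha2]; ring
    · intro h; have := congrFun h 0; simp at this; exact h1 this
    · intro r h
      have hc2 := congrFun h 2
      simp at hc2
      exact h1 hc2.symm
  push_neg at h1
  have h0 : a0 ≠ 0 := by tauto
  refine ⟨![-a1, a0, 0], ![-a2, 0, a0], ?_, ?_, ?_, ?_⟩
  · rw [f_sum]; simp [← ha0, ← ha1, ← ha2]; ring
  · rw [f_sum]; simp [← ha0, ← ha1, ← ha2]; ring
  · intro h; have := congrFun h 1; simp at this; exact h0 this
  · intro r h
    have hc2 := congrFun h 2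
    simp at hc2
    exact h0 hc2.symm

/-! #### Ideal points: circle representatives -/

/-- The value of `f` at the `z = 1` normalized representative of `x`. -/
def cval (x : ℙ ℝ V3) : ℝ := f ((x.rep 2)⁻¹ • x.rep)

lemma rep2_ne_zero {x : ℙ ℝ V3} (hb : kleinForm x.rep = 0) : x.rep 2 ≠ 0 := by
  intro h
  apply x.rep_nonzero
  rw [kleinForm, h] at hb
  have h0 : x.rep 0 = 0 := by
    have : x.rep 0^2 = 0 := by nlinarith [sq_nonneg (x.rep 0), sq_nonneg (x.rep 1)]
    exact pow_eq_zero_iff two_ne_zero |>.mp this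
  have h1 : x.rep 1 = 0 := by
    have : x.rep 1^2 = 0 := by nlinarith [sq_nonneg (x.rep 0), sq_nonneg (x.rep 1)]
    exact pow_eq_zero_iff two_ne_zero |>.mp this
  funext i
  fin_cases i
  · exact h0
  · exact h1
  · exact h

/-- Full data for an ideal vertex. -/
lemma vertex_data {x : ℙ ℝ V3} (hb : kleinForm x.rep = 0) (hf : f x.rep ≠ 0) :
    ∃ (θ z : ℝ), 0 ≤ θ ∧ θ < 2*π ∧ cval f x ≠ 0 ∧ z ≠ 0 ∧
      x.rep = z • circ θ ∧ f (circ θ) = cval f x ∧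
      chartPt f x = (cval f x)⁻¹ • circ θ := by
  set z := x.rep 2 with hz
  have hz0 : z ≠ 0 := rep2_ne_zero hb
  set u : V3 := z⁻¹ • x.rep with hu
  have hu2 : u 2 = 1 := by
    simp [hu, Pi.smul_apply, smul_eq_mul, inv_mul_cancel₀ hz0]
    exact inv_mul_cancel₀ hz0
  have hQu : kleinForm u = 0 := by
    rw [hu, kleinForm_smul, hb, mul_zero]
  have hunit : (u 0)^2 + (u 1)^2 = 1 := by
    rw [kleinForm, hu2] at hQu; linarith
  obtain ⟨θ, hθ0, hθ2, hcos, hsin⟩ := circle_angle hunit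
  have hucirc : u = circ θ := by
    funext i
    fin_cases i
    · exact hcos.symm
    · exact hsin.symm
    · exact hu2
  have hrep : x.rep = z • circ θ := by
    rw [← hucirc, hu, smul_smul, mul_inv_cancel₀ hz0, one_smul]
  have hcv : f (circ θ) = cval f x := by
    rw [cval, ← hz, ← hu, hucirc]
  have hcv0 : cval f x ≠ 0 := by
    rw [← hcv]
    intro h
    apply hf
    rw [hrep, map_smul, smul_eq_mul, h, mul_zero]
  refine ⟨θ, z, hθ0, hθ2, hcv0, hz0, hrep, hcv, ?_⟩
  rw [chartPt, hrep, map_smul, smul_eq_mul, hcv, smul_smul]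
  congr 1
  field_simp

lemma cval_ne_zero {x : ℙ ℝ V3} (hb : kleinForm x.rep = 0) (hf : f x.rep ≠ 0) :
    cval f x ≠ 0 := by
  obtain ⟨θ, z, _, _, h, _⟩ := vertex_data f hb hf
  exact h

lemma eq_of_rep_smul {x y : ℙ ℝ V3} {z1 z2 : ℝ} {U : V3}
    (h1 : x.rep = z1 • U) (h2 : y.rep = z2 • U) (hz2 : z2 ≠ 0) : x = y := by
  have hz1 : z1 ≠ 0 := by
    intro h; apply x.rep_nonzero; rw [h1, h, zero_smul]
  rw [← x.mk_rep, ← y.mk_rep]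
  rw [Projectivization.mk_eq_mk_iff]
  refine ⟨Units.mk0 (z1 * z2⁻¹) (by simp [hz1, hz2]), ?_⟩
  have : (Units.mk0 (z1 * z2⁻¹) (by simp [hz1, hz2]) : ℝˣ) • y.rep = (z1 * z2⁻¹) • y.rep := rfl
  rw [this, h1, h2, smul_smul]
  congr 1
  field_simp

/-! #### Convexity helpers -/

lemma mem_hull3 {s : Set V3} {x1 x2 x3 y : V3} (h1 : x1 ∈ s) (h2 : x2 ∈ s) (h3 : x3 ∈ s)
    {μ1 μ2 μ3 : ℝ} (hμ1 : 0 ≤ μ1) (hμ2 : 0 ≤ μ2) (hμ3 : 0 ≤ μ3)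
    (hsum : μ1 + μ2 + μ3 = 1) (hy : μ1 • x1 + μ2 • x2 + μ3 • x3 = y) :
    y ∈ convexHull ℝ s := by
  subst hy
  have hx1 := subset_convexHull ℝ s h1
  have hx2 := subset_convexHull ℝ s h2
  have hx3 := subset_convexHull ℝ s h3
  have hc := convex_convexHull ℝ s
  by_cases h23 : μ2 + μ3 = 0
  · have hμ2' : μ2 = 0 := by linarith
    have hμ3' : μ3 = 0 := by linarith
    have hμ1' : μ1 = 1 := by linarith
    simp [hμ1', hμ2', hμ3', hx1]
  · have hpos : 0 < μ2 + μ3 := lt_of_le_of_ne (by linarith) (Ne.symm h23)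
    have hz : (μ2/(μ2+μ3)) • x2 + (μ3/(μ2+μ3)) • x3 ∈ convexHull ℝ s := by
      apply hc hx2 hx3 (by positivity) (by positivity)
      field_simp
    have hmem := hc hx1 hz hμ1 (le_of_lt hpos) (by linarith)
    have e2 : (μ2+μ3) * (μ2/(μ2+μ3)) = μ2 := by field_simp
    have e3 : (μ2+μ3) * (μ3/(μ2+μ3)) = μ3 := by field_simp
    rw [smul_add, smul_smul, smul_smul, e2, e3] at hmem
    rwa [← add_assoc] at hmem

/-- The core Radon-type computation. -/
lemma core {A1 A2 A3 A4 c1 c2 c3 c4 : ℝ} {u1 u2 u3 u4 : V3}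
    (hA1 : 0 < A1) (hA2 : 0 < A2) (hA3 : 0 < A3) (hA4 : 0 < A4)
    (hc1 : c1 ≠ 0) (hc2 : c2 ≠ 0) (hc3 : c3 ≠ 0) (hc4 : c4 ≠ 0)
    (h12 : 0 < c1 * c2) (h23 : 0 < c2 * c3) (h24 : c2 * c4 < 0)
    (hrel : A1 • u1 + A3 • u3 = A2 • u2 + A4 • u4)
    (hsc : A1 * c1 + A3 * c3 = A2 * c2 + A4 * c4) :
    ∃ μ1 μ3 μ4 : ℝ, 0 ≤ μ1 ∧ 0 ≤ μ3 ∧ 0 ≤ μ4 ∧ μ1 + μ3 + μ4 = 1 ∧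
      μ1 • (c1⁻¹ • u1) + μ3 • (c3⁻¹ • u3) + μ4 • (c4⁻¹ • u4) = c2⁻¹ • u2 := by
  have hA2c2 : A2 * c2 ≠ 0 := mul_ne_zero (ne_of_gt hA2) hc2
  refine ⟨(A1*c1)/(A2*c2), (A3*c3)/(A2*c2), (-(A4*c4))/(A2*c2), ?_, ?_, ?_, ?_, ?_⟩
  · exact le_of_lt (div_pos_of_mul_pos (by nlinarith [mul_pos (mul_pos hA1 hA2) h12]))
  · exact le_of_lt (div_pos_of_mul_pos (by nlinarith [mul_pos (mul_pos hA3 hA2) h23]))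
  · exact le_of_lt (div_pos_of_mul_pos (by nlinarith [mul_pos (mul_pos hA4 hA2) (neg_pos.mpr h24)]))
  · field_simp
    linarith [hsc]
  · funext i
    have hri := congrFun hrel i
    simp only [Pi.add_apply, Pi.smul_apply, smul_eq_mul] at hri ⊢
    have e1 : (A1*c1)/(A2*c2) * (c1⁻¹ * u1 i) = ((A2*c2)⁻¹ * A1) * u1 i := by
      field_simp
    have e3 : (A3*c3)/(A2*c2) * (c3⁻¹ * u3 i) = ((A2*c2)⁻¹ * A3) * u3 i := by
      field_simp
    have e4 : (-(A4*c4))/(A2*c2) * (c4⁻¹ * u4 i) = -(((A2*c2)⁻¹ * A4) * u4 i) := by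
      field_simp
    have e2 : c2⁻¹ * u2 i = ((A2*c2)⁻¹ * A2) * u2 i := by
      congr 1
      field_simp
    rw [e1, e3, e4, e2]
    linear_combination ((A2*c2)⁻¹) * hri


/-! #### All vertices on the same side: contradiction with weak ideality -/

lemma sign_contra {P : Set (ℙ ℝ V3)} {Vs : Finset (ℙ ℝ V3)}
    (hchart : InChart f P)
    (himage : chartPt f '' P = convexHull ℝ (chartPt f '' (Vs : Set (ℙ ℝ V3))))
    (hbV : ∀ v ∈ Vs, kleinForm v.rep = 0) (hfV : ∀ v ∈ Vs, f v.rep ≠ 0)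
    {w : ℙ ℝ V3} (hwint : w ∈ interior P) (hwb : kleinForm w.rep = 0)
    (hsame : ∀ v ∈ Vs, ∀ v' ∈ Vs, 0 < cval f v * cval f v') : False := by
  obtain ⟨ε, hε, hball⟩ := ball_lemma f hchart hwint
  have hwP : w ∈ P := interior_subset hwint
  have hfw : f w.rep ≠ 0 := hchart w hwP
  set wb := chartPt f w with hwbdef
  have hQwb : kleinForm wb = 0 := by
    rw [hwbdef, chartPt, kleinForm_smul, hwb, mul_zero]
  -- the chart image of `P` lies in `{kleinForm ≤ 0}`
  have hQle : ∀ y ∈ convexHull ℝ (chartPt f '' (Vs : Set (ℙ ℝ V3))), kleinForm y ≤ 0 := by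
    intro y hy
    have hTcoe : ((Vs.image (chartPt f) : Finset V3) : Set V3) = chartPt f '' (Vs : Set (ℙ ℝ V3)) :=
      Finset.coe_image
    rw [← hTcoe, Finset.convexHull_eq] at hy
    obtain ⟨W, hW0, hW1, hWc⟩ := hy
    rw [Finset.centerMass_eq_of_sum_1 _ _ hW1] at hWc
    have hbT : ∀ y' ∈ Vs.image (chartPt f), ∀ z ∈ Vs.image (chartPt f), bform y' z ≤ 0 := by
      intro y' hy' z hz
      obtain ⟨v, hv, rfl⟩ := Finset.mem_image.1 hy'
      obtain ⟨v', hv', rfl⟩ := Finset.mem_image.1 hz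
      obtain ⟨θ, zz, _, _, hcv0, _, _, _, hch⟩ := vertex_data f (hbV v hv) (hfV v hv)
      obtain ⟨θ', zz', _, _, hcv0', _, _, _, hch'⟩ := vertex_data f (hbV v' hv') (hfV v' hv')
      rw [hch, hch', bform_smul]
      have hpos : 0 < (cval f v)⁻¹ * (cval f v')⁻¹ := by
        rw [← mul_inv]
        exact inv_pos.mpr (hsame v hv v' hv')
      exact mul_nonpos_of_nonneg_of_nonpos (le_of_lt hpos) (bform_circ_nonpos θ θ')
    have hc := kleinForm_combo (Vs.image (chartPt f)) W hbT hW0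
    rw [← hWc]
    simpa [id] using hc
  obtain ⟨e, hfe, hQe⟩ := exists_pos_dir f
  have hne : (0:ℝ) < ‖e‖ + 1 := by positivity
  set d := ε / (‖e‖ + 1) with hd
  have hdpos : 0 < d := by positivity
  set δ := if 0 ≤ bform wb e then d else -d with hδ
  have habsδ : |δ| = d := by
    rw [hδ]
    split
    · exact abs_of_pos hdpos
    · rw [abs_neg]; exact abs_of_pos hdpos
  have hδB : 0 ≤ δ * bform wb e := by
    rw [hδ]
    split
    · next h => exact mul_nonneg (le_of_lt hdpos) h
    · next h => push_neg at h; exact le_of_lt (mul_pos_of_neg_of_neg (by linarith) h)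
  set u' := wb + δ • e with hu'
  have hfu' : f u' = 1 := by
    rw [hu', map_add, map_smul, smul_eq_mul, hfe, mul_zero, add_zero, f_chartPt f hfw]
  have hnorm : ‖u' - wb‖ < ε := by
    rw [hu', add_sub_cancel_left, norm_smul, Real.norm_eq_abs, habsδ]
    calc d * ‖e‖ < d * (‖e‖ + 1) := by nlinarith
      _ = ε := by rw [hd]; field_simp
  have hmem : u' ∈ chartPt f '' P := hball u' hfu' hnorm
  rw [himage] at hmem
  have hle := hQle u' hmem
  rw [hu', kleinForm_add_smul, hQwb] at hle
  have hδ2 : δ^2 = d^2 := by rw [← sq_abs, habsδ]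
  have hpos2 : 0 < d^2 * kleinForm e := by positivity
  have h2 : δ^2 * kleinForm e = d^2 * kleinForm e := by rw [hδ2]
  linarith

/-! #### The polygon has at least three vertices -/

lemma card_ge3 {P : Set (ℙ ℝ V3)} {Vs : Finset (ℙ ℝ V3)} (hf0 : f ≠ 0)
    (hchart : InChart f P)
    (himage : chartPt f '' P = convexHull ℝ (chartPt f '' (Vs : Set (ℙ ℝ V3))))
    {w : ℙ ℝ V3} (hwint : w ∈ interior P) : 3 ≤ Vs.card := by
  refine le_trans ?_ (Finset.card_image_le (f := chartPt f))
  by_contra hcard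
  push_neg at hcard
  set T := Vs.image (chartPt f) with hT
  -- `T` is covered by a pair of points
  have hcover : ∃ p q : V3, (T : Set V3) ⊆ {p, q} := by
    rcases T.eq_empty_or_nonempty with h | ⟨p, hp⟩
    · exact ⟨0, 0, by rw [h]; simp⟩
    by_cases hq : ∃ q ∈ T, q ≠ p
    · obtain ⟨q, hqT, hqp⟩ := hq
      refine ⟨p, q, fun r hr => ?_⟩
      by_contra hrpq
      simp only [Set.mem_insert_iff, Set.mem_singleton_iff] at hrpq
      push_neg at hrpq
      have hsub : ({p, q, r} : Finset V3) ⊆ T := by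
        intro z hz
        simp only [Finset.mem_insert, Finset.mem_singleton] at hz
        rcases hz with rfl | rfl | rfl
        · exact hp
        · exact hqT
        · exact hr
      have hc3 : ({p, q, r} : Finset V3).card = 3 := by
        rw [Finset.card_insert_of_notMem (by simp [hqp.symm, Ne.symm hrpq.1]),
          Finset.card_insert_of_notMem (by simp [Ne.symm hrpq.2])]
        simp
      have := Finset.card_le_card hsub
      omega
    · push_neg at hq
      exact ⟨p, p, fun r hr => by simp [hq r hr]⟩
  obtain ⟨p, q, hpq⟩ := hcover
  have hseg : convexHull ℝ (chartPt f '' (Vs : Set (ℙ ℝ V3))) ⊆ segment ℝ p q := by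
    have h1 : chartPt f '' (Vs : Set (ℙ ℝ V3)) = (T : Set V3) := Finset.coe_image.symm
    rw [h1, ← convexHull_pair]
    exact convexHull_mono hpq
  obtain ⟨ε, hε, hball⟩ := ball_lemma f hchart hwint
  obtain ⟨e1, e2, hfe1, hfe2, he1ne, hnr⟩ := exists_two_dirs f hf0
  have hwP : w ∈ P := interior_subset hwint
  have hfw : f w.rep ≠ 0 := hchart w hwP
  set wb := chartPt f w with hwbdef
  set d := ε / (‖e1‖ + ‖e2‖ + 1) with hd
  have hd1 : (0:ℝ) < ‖e1‖ + ‖e2‖ + 1 := by positivity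
  have hdpos : 0 < d := by positivity
  have hmem : ∀ e : V3, f e = 0 → ‖e‖ ≤ ‖e1‖ + ‖e2‖ → wb + d • e ∈ segment ℝ p q := by
    intro e hfe hee
    apply hseg
    rw [← himage]
    apply hball
    · rw [map_add, map_smul, smul_eq_mul, hfe, mul_zero, add_zero, f_chartPt f hfw]
    · rw [add_sub_cancel_left, norm_smul, Real.norm_eq_abs, abs_of_pos hdpos]
      calc d * ‖e‖ ≤ d * (‖e1‖ + ‖e2‖) := by nlinarith
        _ < d * (‖e1‖ + ‖e2‖ + 1) := by nlinarith
        _ = ε := by rw [hd]; field_simp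
  have hw0 : wb ∈ segment ℝ p q := by
    have := hmem 0 (map_zero f) (by simp; positivity)
    simpa using this
  have hw1 : wb + d • e1 ∈ segment ℝ p q := hmem e1 hfe1 (by nlinarith [norm_nonneg e2])
  have hw2 : wb + d • e2 ∈ segment ℝ p q := hmem e2 hfe2 (by nlinarith [norm_nonneg e1])
  obtain ⟨a0, b0, ha0, hb0, hab0, heq0⟩ := hw0
  obtain ⟨a1, b1, ha1, hb1, hab1, heq1⟩ := hw1
  obtain ⟨a2, b2, ha2, hb2, hab2, heq2⟩ := hw2
  have hte1 : e1 = ((a1 - a0)/d) • (p - q) := by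
    funext i
    have c0 := congrFun heq0 i
    have c1 := congrFun heq1 i
    simp only [Pi.add_apply, Pi.smul_apply, Pi.sub_apply, smul_eq_mul] at c0 c1 ⊢
    have hb0' : b0 = 1 - a0 := by linarith
    have hb1' : b1 = 1 - a1 := by linarith
    rw [hb0'] at c0
    rw [hb1'] at c1
    have key : d * e1 i = (a1-a0)*(p i - q i) := by linear_combination c0 - c1
    rw [div_mul_eq_mul_div, eq_div_iff hdpos.ne']
    linear_combination key
  have hte2 : e2 = ((a2 - a0)/d) • (p - q) := by
    funext i
    have c0 := congrFun heq0 i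
    have c2 := congrFun heq2 i
    simp only [Pi.add_apply, Pi.smul_apply, Pi.sub_apply, smul_eq_mul] at c0 c2 ⊢
    have hb0' : b0 = 1 - a0 := by linarith
    have hb2' : b2 = 1 - a2 := by linarith
    rw [hb0'] at c0
    rw [hb2'] at c2
    have key : d * e2 i = (a2-a0)*(p i - q i) := by linear_combination c0 - c2
    rw [div_mul_eq_mul_div, eq_div_iff hdpos.ne']
    linear_combination key
  set t1 := (a1 - a0)/d with ht1
  set t2 := (a2 - a0)/d with ht2
  by_cases ht10 : t1 = 0
  · apply he1ne
    rw [hte1, ht10, zero_smul]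
  · apply hnr (t2 / t1)
    rw [hte1, hte2, smul_smul]
    congr 1
    field_simp


/-! #### No four vertices with sign pattern (3,1) -/

lemma no31 {Vs : Finset (ℙ ℝ V3)}
    (hext : ∀ v ∈ Vs, chartPt f v ∉
      convexHull ℝ (chartPt f '' ((Vs.erase v : Finset _) : Set (ℙ ℝ V3))))
    (v : Fin 4 → ℙ ℝ V3) (hv : ∀ i, v i ∈ Vs) (hinj : Function.Injective v)
    (hb : ∀ i, kleinForm (v i).rep = 0) (hfv : ∀ i, f (v i).rep ≠ 0)
    (hsign : (∏ i : Fin 4, cval f (v i)) < 0) : False := by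
  choose θ z hθ0 hθ2 hc0 hz0 hrep hfc hch using fun i => vertex_data f (hb i) (hfv i)
  have hθinj : Function.Injective θ := by
    intro i j hij
    apply hinj
    have h2 : (v j).rep = z j • circ (θ i) := by rw [hij]; exact hrep j
    exact eq_of_rep_smul (hrep i) h2 (hz0 j)
  set σ := Tuple.sort θ with hσ
  have hsm : StrictMono (θ ∘ σ) :=
    (Tuple.monotone_sort θ).strictMono_of_injective (hθinj.comp σ.injective)
  set ds : Fin 4 → ℝ := fun k => cval f (v (σ k)) with hds
  have hdsne : ∀ k, ds k ≠ 0 := fun k => hc0 (σ k)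
  -- sortedness facts
  have h01 : θ (σ 0) < θ (σ 1) := hsm (by decide)
  have h12 : θ (σ 1) < θ (σ 2) := hsm (by decide)
  have h23 : θ (σ 2) < θ (σ 3) := hsm (by decide)
  have hwidth : θ (σ 3) - θ (σ 0) < 2*π := by
    have := hθ0 (σ 0); have := hθ2 (σ 3); linarith
  -- determinants
  set B0 := detD (θ (σ 1)) (θ (σ 2)) (θ (σ 3)) with hB0
  set B1 := detD (θ (σ 0)) (θ (σ 2)) (θ (σ 3)) with hB1
  set B2 := detD (θ (σ 0)) (θ (σ 1)) (θ (σ 3)) with hB2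
  set B3 := detD (θ (σ 0)) (θ (σ 1)) (θ (σ 2)) with hB3
  have hB0p : 0 < B0 := detD_pos h12 h23 (by linarith [hθ0 (σ 0)])
  have hB1p : 0 < B1 := detD_pos (lt_trans h01 h12) h23 hwidth
  have hB2p : 0 < B2 := detD_pos h01 (lt_trans h12 h23) hwidth
  have hB3p : 0 < B3 := detD_pos h01 h12 (by linarith [hθ2 (σ 3)])
  have hcr : B0 • circ (θ (σ 0)) + B2 • circ (θ (σ 2)) =
      B1 • circ (θ (σ 1)) + B3 • circ (θ (σ 3)) :=
    cramer (θ (σ 0)) (θ (σ 1)) (θ (σ 2)) (θ (σ 3))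
  -- product of the sorted c-values is negative
  have hprod : ds 0 * ds 1 * (ds 2 * ds 3) < 0 := by
    have e := Equiv.prod_comp σ (fun i => cval f (v i))
    rw [Fin.prod_univ_four] at e
    have e2 : (∏ i : Fin 4, cval f (v i)) =
        cval f (v 0) * cval f (v 1) * cval f (v 2) * cval f (v 3) := Fin.prod_univ_four _
    rw [e2] at e
    have : ds 0 * ds 1 * ds 2 * ds 3 < 0 := by rw [hds]; simp only []; linarith [hsign, e]
    linarith [this]
  -- the workhorse: one application of `core` and the extremality hypothesis
  have main : ∀ (k1 k2 k3 k4 : Fin 4) (E1 E2 E3 E4 : ℝ), 0 < E1 → 0 < E2 → 0 < E3 → 0 < E4 →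
      (E1 • circ (θ (σ k1)) + E3 • circ (θ (σ k3)) =
        E2 • circ (θ (σ k2)) + E4 • circ (θ (σ k4))) →
      0 < ds k1 * ds k2 → 0 < ds k2 * ds k3 → ds k2 * ds k4 < 0 →
      k1 ≠ k2 → k3 ≠ k2 → k4 ≠ k2 → False := by
    intro k1 k2 k3 k4 E1 E2 E3 E4 hE1 hE2 hE3 hE4 hrel hs12 hs23 hs24 hne1 hne3 hne4
    have hsc : E1 * ds k1 + E3 * ds k3 = E2 * ds k2 + E4 * ds k4 := by
      have h := congrArg f hrel
      simp only [map_add, map_smul, smul_eq_mul] at h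
      rw [hfc (σ k1), hfc (σ k2), hfc (σ k3), hfc (σ k4)] at h
      exact h
    obtain ⟨μ1, μ3, μ4, hμ1, hμ3, hμ4, hsum, hcomb⟩ :=
      core hE1 hE2 hE3 hE4 (hdsne k1) (hdsne k2) (hdsne k3) (hdsne k4) hs12 hs23 hs24 hrel hsc
    apply hext (v (σ k2)) (hv _)
    have hmemer : ∀ j : Fin 4, j ≠ k2 →
        chartPt f (v (σ j)) ∈ chartPt f '' ((Vs.erase (v (σ k2)) : Finset _) : Set (ℙ ℝ V3)) := by
      intro j hj
      apply Set.mem_image_of_mem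
      rw [Finset.mem_coe, Finset.mem_erase]
      exact ⟨fun h => hj (σ.injective (hinj h)), hv _⟩
    apply mem_hull3 (hmemer k1 hne1) (hmemer k3 hne3) (hmemer k4 hne4) hμ1 hμ3 hμ4 hsum
    rw [hch (σ k1), hch (σ k2), hch (σ k3), hch (σ k4)]
    exact hcomb
  -- case analysis on the position of the minority sign
  rcases lt_or_gt_of_ne (mul_ne_zero (hdsne 1) (hdsne 3)) with h13 | h13
  · -- minority among positions 1, 3
    have h02 : 0 < ds 0 * ds 2 := by
      by_contra hc
      push_neg at hc
      nlinarith [hprod]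
    rcases lt_or_gt_of_ne (mul_ne_zero (hdsne 0) (hdsne 1)) with h01' | h01'
    · -- minority is position 1 : express position 3
      have h230 : 0 < ds 2 * ds 3 := by
        apply pos_of_sq_mul (a := ds 0 * ds 1)
        nlinarith [mul_pos h02 (mul_pos_of_neg_of_neg h01' h13)]
      have h30 : 0 < ds 3 * ds 0 := by
        apply pos_of_sq_mul (a := ds 1)
        nlinarith [mul_pos_of_neg_of_neg h01' h13]
      exact main 2 3 0 1 B2 B3 B0 B1 hB2p hB3p hB0p hB1p
        (by linear_combination (norm := module) hcr) h230 h30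
        (by linarith) (by decide) (by decide) (by decide)
    · -- minority is position 3 : express position 1
      have h120 : 0 < ds 1 * ds 2 := by
        apply pos_of_sq_mul (a := ds 0)
        nlinarith [mul_pos h01' h02]
      exact main 0 1 2 3 B0 B1 B2 B3 hB0p hB1p hB2p hB3p hcr h01' h120 h13
        (by decide) (by decide) (by decide)
  · -- minority among positions 0, 2
    have h02 : ds 0 * ds 2 < 0 := by
      by_contra hc
      push_neg at hc
      have h02' : 0 < ds 0 * ds 2 :=
        lt_of_le_of_ne hc (fun h => (mul_ne_zero (hdsne 0) (hdsne 2)) h.symm)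
      nlinarith [hprod]
    rcases lt_or_gt_of_ne (mul_ne_zero (hdsne 1) (hdsne 2)) with h12' | h12'
    · -- minority is position 2 : express position 0
      have h10 : 0 < ds 1 * ds 0 := by
        apply pos_of_sq_mul (a := ds 2)
        nlinarith [mul_pos_of_neg_of_neg h02 h12']
      have h03 : 0 < ds 0 * ds 3 := by
        apply pos_of_sq_mul (a := ds 1)
        nlinarith [mul_pos h10 h13]
      exact main 1 0 3 2 B1 B0 B3 B2 hB1p hB0p hB3p hB2p
        (by linear_combination (norm := module) -hcr) h10 h03
        (by linarith) (by decide) (by decide) (by decide)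
    · -- minority is position 0 : express position 2
      have h231 : 0 < ds 2 * ds 3 := by
        apply pos_of_sq_mul (a := ds 1)
        nlinarith [mul_pos h12' h13]
      exact main 1 2 3 0 B1 B2 B3 B0 hB1p hB2p hB3p hB0p
        (by linear_combination (norm := module) -hcr) h12' h231
        (by linarith) (by decide) (by decide) (by decide)


/-! #### A continuous sign function on `ℝP²` -/

/-- The scale-invariant function `u ↦ f(u)·u₂ / ‖u‖²` descended to `ℝP²`. -/
def Hfun : ℙ ℝ V3 → ℝ :=
  Projectivization.lift
    (fun u : {v : V3 // v ≠ 0} => f u.1 * u.1 2 / (u.1 0^2 + u.1 1^2 + u.1 2^2))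
    (by
      rintro ⟨a, ha⟩ ⟨b, hb⟩ t (rfl : a = t • b)
      have ht : t ≠ 0 := by
        rintro rfl
        exact ha (zero_smul ℝ b)
      have hden : b 0^2 + b 1^2 + b 2^2 ≠ 0 := ne_of_gt (sumsq_pos hb)
      have h1 : (t • b) 0 ^2 + (t • b) 1^2 + (t • b) 2^2 = t^2 * (b 0^2 + b 1^2 + b 2^2) := by
        simp only [Pi.smul_apply, smul_eq_mul]; ring
      show f (t • b) * (t • b) 2 / ((t • b) 0 ^2 + (t • b) 1^2 + (t • b) 2^2) = _
      have h2 : (t • b) 2 = t * b 2 := rfl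
      rw [h1, h2, map_smul, smul_eq_mul]
      field_simp)

lemma Hfun_cont : Continuous (Hfun f) := by
  apply Continuous.quotient_lift
  apply Continuous.div
  · exact (f.continuous_of_finiteDimensional.comp continuous_subtype_val).mul
      ((continuous_apply 2).comp continuous_subtype_val)
  · exact ((((continuous_apply (0 : Fin 3)).comp continuous_subtype_val).pow 2).add
      (((continuous_apply (1 : Fin 3)).comp continuous_subtype_val).pow 2)).add
      (((continuous_apply (2 : Fin 3)).comp continuous_subtype_val).pow 2)
  · exact fun u => ne_of_gt (sumsq_pos u.2)

lemma Hfun_rep (x : ℙ ℝ V3) :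
    Hfun f x = f x.rep * x.rep 2 / (x.rep 0^2 + x.rep 1^2 + x.rep 2^2) := by
  conv_lhs => rw [← x.mk_rep]
  rfl

/-- At an ideal vertex, `Hfun` computes to `cval/2`. -/
lemma Hfun_vertex {x : ℙ ℝ V3} (hb : kleinForm x.rep = 0) (hf : f x.rep ≠ 0) :
    Hfun f x = cval f x / 2 := by
  obtain ⟨θ, z, _, _, hc0, hz0, hrep, hfc, _⟩ := vertex_data f hb hf
  have h0 : x.rep 0 = z * Real.cos θ := by
    rw [hrep]; simp [circ, Pi.smul_apply]
  have h1 : x.rep 1 = z * Real.sin θ := by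
    rw [hrep]; simp [circ, Pi.smul_apply]
  have h2 : x.rep 2 = z * 1 := by
    rw [hrep]; simp [circ, Pi.smul_apply]
  have hfr : f x.rep = z * cval f x := by
    rw [hrep, map_smul, smul_eq_mul, hfc]
  rw [Hfun_rep, h0, h1, h2, hfr]
  have hden : (z*Real.cos θ)^2 + (z*Real.sin θ)^2 + (z*1)^2 = 2*z^2 := by
    have := Real.sin_sq_add_cos_sq θ
    linear_combination z^2 * this
  rw [hden]
  field_simp

lemma rep2_ne_zero_of_neg {x : ℙ ℝ V3} (hb : kleinForm x.rep < 0) : x.rep 2 ≠ 0 := by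
  intro h
  rw [kleinForm, h] at hb
  nlinarith [sq_nonneg (x.rep 0), sq_nonneg (x.rep 1)]

lemma Hfun_ne_zero {x : ℙ ℝ V3} (hb : kleinForm x.rep < 0) (hf : f x.rep ≠ 0) :
    Hfun f x ≠ 0 := by
  rw [Hfun_rep]
  exact div_ne_zero (mul_ne_zero hf (rep2_ne_zero_of_neg hb))
    (ne_of_gt (sumsq_pos x.rep_nonzero))

/-! #### Sign coherence on a connected subset of `P ∩ H²` -/

lemma sign_coherent {P : Set (ℙ ℝ V3)} (hchart : InChart f P)
    {x : ℙ ℝ V3} (hx : x ∈ P ∩ kleinH2) :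
    ∀ v ∈ (closure (connectedComponentIn (P ∩ kleinH2) x)),
      0 ≤ Hfun f v * Hfun f x := by
  set comp := connectedComponentIn (P ∩ kleinH2) x with hcomp
  have hsub : comp ⊆ P ∩ kleinH2 := connectedComponentIn_subset _ _
  have hxc : x ∈ comp := mem_connectedComponentIn hx
  have hne : ∀ y ∈ comp, Hfun f y ≠ 0 := by
    intro y hy
    obtain ⟨hyP, hyK⟩ := hsub hy
    exact Hfun_ne_zero f hyK (hchart y hyP)
  have hI : IsPreconnected (Hfun f '' comp) :=
    (isPreconnected_connectedComponentIn).image _ ((Hfun_cont f).continuousOn)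
  have hxI : Hfun f x ∈ Hfun f '' comp := ⟨x, hxc, rfl⟩
  have hxne : Hfun f x ≠ 0 := hne x hxc
  have hsame : ∀ r ∈ Hfun f '' comp, 0 < r * Hfun f x := by
    intro r hr
    obtain ⟨y, hy, rfl⟩ := hr
    have hrne : Hfun f y ≠ 0 := hne y hy
    rcases lt_or_gt_of_ne (mul_ne_zero hrne hxne) with hneg | hpos
    · exfalso
      rcases mul_neg_iff.1 hneg with ⟨h1, h2⟩ | ⟨h1, h2⟩
      · have h0 : (0:ℝ) ∈ Hfun f '' comp := by
          have := hI.ordConnected.out hxI ⟨y, hy, rfl⟩ (⟨le_of_lt h2, le_of_lt h1⟩ :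
            (0:ℝ) ∈ Set.Icc (Hfun f x) (Hfun f y))
          exact this
        obtain ⟨y0, hy0, hy0eq⟩ := h0
        exact hne y0 hy0 hy0eq
      · have h0 : (0:ℝ) ∈ Hfun f '' comp := by
          have := hI.ordConnected.out ⟨y, hy, rfl⟩ hxI (⟨le_of_lt h1, le_of_lt h2⟩ :
            (0:ℝ) ∈ Set.Icc (Hfun f y) (Hfun f x))
          exact this
        obtain ⟨y0, hy0, hy0eq⟩ := h0
        exact hne y0 hy0 hy0eq
    · exact hpos
  intro v hv
  have hclos : Hfun f v ∈ closure (Hfun f '' comp) :=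
    ((Hfun_cont f).continuousWithinAt).mem_closure_image hv
  have hclosed : IsClosed {r : ℝ | 0 ≤ r * Hfun f x} :=
    isClosed_le continuous_const (continuous_mul_right _)
  have : closure (Hfun f '' comp) ⊆ {r : ℝ | 0 ≤ r * Hfun f x} :=
    closure_minimal (fun r hr => le_of_lt (hsame r hr)) hclosed
  exact this hclos

/-! #### Getting three distinct elements from a finset of size `≥ 3` -/

lemma three_elems {s : Finset (ℙ ℝ V3)} (h : 3 ≤ s.card) :
    ∃ a ∈ s, ∃ b ∈ s, ∃ c ∈ s, a ≠ b ∧ a ≠ c ∧ b ≠ c := by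
  have hpos : 0 < s.card := by omega
  obtain ⟨a, ha⟩ := Finset.card_pos.mp hpos
  have h2 : 0 < (s.erase a).card := by
    rw [Finset.card_erase_of_mem ha]; omega
  obtain ⟨b, hb⟩ := Finset.card_pos.mp h2
  have h3 : 0 < ((s.erase a).erase b).card := by
    rw [Finset.card_erase_of_mem hb, Finset.card_erase_of_mem ha]; omega
  obtain ⟨c, hc⟩ := Finset.card_pos.mp h3
  obtain ⟨hba, hbs⟩ := Finset.mem_erase.1 hb
  obtain ⟨hcb, hc'⟩ := Finset.mem_erase.1 hc
  obtain ⟨hca, hcs⟩ := Finset.mem_erase.1 hc'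
  exact ⟨a, ha, b, hbs, c, hcs, Ne.symm hba, Ne.symm hca, Ne.symm hcb⟩


lemma inj4 {α : Type*} {a b c d : α} (hab : a ≠ b) (hac : a ≠ c) (had : a ≠ d)
    (hbc : b ≠ c) (hbd : b ≠ d) (hcd : c ≠ d) : Function.Injective ![a,b,c,d] := by
  intro i j h
  fin_cases i <;> fin_cases j <;>
    first
    | rfl
    | (exfalso; revert h;
       simp [hab, hac, had, hbc, hbd, hcd, hab.symm, hac.symm, had.symm,
         hbc.symm, hbd.symm, hcd.symm])

end WeaklyIdealAux

open WeaklyIdealAux in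
/-- A weakly ideal convex polygon in `ℝP²` (all vertices on the conic
`∂H²`, interior meeting `∂H²`) has three or four vertices, and at most two of its vertices
lie in the closure of each connected component of its intersection with `H²`. -/
theorem weakly_ideal_polygon_three_or_four_vertices
    (P : Set (ℙ ℝ (Fin 3 → ℝ))) (Vs : Finset (ℙ ℝ (Fin 3 → ℝ)))
    (hP : IsPolygon P Vs) (hV : (Vs : Set (ℙ ℝ (Fin 3 → ℝ))) ⊆ idealBoundary)
    (hweak : (interior P ∩ idealBoundary).Nonempty) :
    (Vs.card = 3 ∨ Vs.card = 4) ∧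
      ∀ x ∈ P ∩ kleinH2,
        ((Vs : Set (ℙ ℝ (Fin 3 → ℝ))) ∩ closure (connectedComponentIn (P ∩ kleinH2) x)).ncard ≤ 2 := by
  obtain ⟨f, hf0, hchart, hVsP, himage, hext⟩ := hP
  have hbV : ∀ v ∈ Vs, kleinForm v.rep = 0 := fun v hv => hV hv
  have hfV : ∀ v ∈ Vs, f v.rep ≠ 0 := fun v hv => hchart v (hVsP hv)
  have hcne : ∀ v ∈ Vs, cval f v ≠ 0 := fun v hv => cval_ne_zero f (hbV v hv) (hfV v hv)
  obtain ⟨w, hwint, hwb⟩ := hweak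
  have hwb0 : kleinForm w.rep = 0 := hwb
  set Vp := Vs.filter (fun v => 0 < cval f v) with hVpdef
  set Vm := Vs.filter (fun v => cval f v < 0) with hVmdef
  have hsplit : Vp.card + Vm.card = Vs.card := by
    have h := Finset.card_filter_add_card_filter_not (s := Vs)
      (p := fun v => 0 < cval f v)
    have heq : Vs.filter (fun v => ¬ 0 < cval f v) = Vm := by
      rw [hVmdef]
      apply Finset.filter_congr
      intro v hv
      simp only [not_lt]
      exact ⟨fun h' => lt_of_le_of_ne h' (hcne v hv), fun h' => h'.le⟩
    rw [heq] at h
    exact h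
  have hVpne : Vp.Nonempty := by
    rw [Finset.nonempty_iff_ne_empty]
    intro hemp
    have hall : ∀ v ∈ Vs, cval f v < 0 := by
      intro v hv
      rcases (hcne v hv).lt_or_gt with h | h
      · exact h
      · exfalso
        have hmem : v ∈ Vp := by rw [hVpdef]; exact Finset.mem_filter.2 ⟨hv, h⟩
        rw [hemp] at hmem
        simp at hmem
    exact sign_contra f hchart himage hbV hfV hwint hwb0
      (fun v hv v' hv' => mul_pos_of_neg_of_neg (hall v hv) (hall v' hv'))
  have hVmne : Vm.Nonempty := by
    rw [Finset.nonempty_iff_ne_empty]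
    intro hemp
    have hall : ∀ v ∈ Vs, 0 < cval f v := by
      intro v hv
      rcases (hcne v hv).lt_or_gt with h | h
      · exfalso
        have hmem : v ∈ Vm := by rw [hVmdef]; exact Finset.mem_filter.2 ⟨hv, h⟩
        rw [hemp] at hmem
        simp at hmem
      · exact h
    exact sign_contra f hchart himage hbV hfV hwint hwb0
      (fun v hv v' hv' => mul_pos (hall v hv) (hall v' hv'))
  have hcard3 : 3 ≤ Vs.card := card_ge3 f hf0 hchart himage hwint
  have hVple : Vp.card ≤ 2 := by
    by_contra hgt
    push_neg at hgt
    obtain ⟨a, ha, b, hb, c, hc, hab, hac, hbc⟩ := three_elems (s := Vp) (by omega)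
    obtain ⟨d, hd⟩ := hVmne
    have haVs : a ∈ Vs := (Finset.mem_filter.1 ha).1
    have hbVs : b ∈ Vs := (Finset.mem_filter.1 hb).1
    have hcVs : c ∈ Vs := (Finset.mem_filter.1 hc).1
    have hdVs : d ∈ Vs := (Finset.mem_filter.1 hd).1
    have hca : 0 < cval f a := (Finset.mem_filter.1 ha).2
    have hcb : 0 < cval f b := (Finset.mem_filter.1 hb).2
    have hcc : 0 < cval f c := (Finset.mem_filter.1 hc).2
    have hcd : cval f d < 0 := (Finset.mem_filter.1 hd).2
    have had : a ≠ d := fun h => by rw [h] at hca; linarith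
    have hbd : b ≠ d := fun h => by rw [h] at hcb; linarith
    have hcd' : c ≠ d := fun h => by rw [h] at hcc; linarith
    apply no31 f hext ![a,b,c,d]
    · intro i
      fin_cases i
      · exact haVs
      · exact hbVs
      · exact hcVs
      · exact hdVs
    · exact inj4 hab hac had hbc hbd hcd'
    · intro i
      fin_cases i
      · exact hbV a haVs
      · exact hbV b hbVs
      · exact hbV c hcVs
      · exact hbV d hdVs
    · intro i
      fin_cases i
      · exact hfV a haVs
      · exact hfV b hbVs
      · exact hfV c hcVs
      · exact hfV d hdVs
    · rw [Fin.prod_univ_four]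
      show cval f a * cval f b * cval f c * cval f d < 0
      exact mul_neg_of_pos_of_neg (mul_pos (mul_pos hca hcb) hcc) hcd
  have hVmle : Vm.card ≤ 2 := by
    by_contra hgt
    push_neg at hgt
    obtain ⟨a, ha, b, hb, c, hc, hab, hac, hbc⟩ := three_elems (s := Vm) (by omega)
    obtain ⟨d, hd⟩ := hVpne
    have haVs : a ∈ Vs := (Finset.mem_filter.1 ha).1
    have hbVs : b ∈ Vs := (Finset.mem_filter.1 hb).1
    have hcVs : c ∈ Vs := (Finset.mem_filter.1 hc).1
    have hdVs : d ∈ Vs := (Finset.mem_filter.1 hd).1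
    have hca : cval f a < 0 := (Finset.mem_filter.1 ha).2
    have hcb : cval f b < 0 := (Finset.mem_filter.1 hb).2
    have hcc : cval f c < 0 := (Finset.mem_filter.1 hc).2
    have hcd : 0 < cval f d := (Finset.mem_filter.1 hd).2
    have had : a ≠ d := fun h => by rw [h] at hca; linarith
    have hbd : b ≠ d := fun h => by rw [h] at hcb; linarith
    have hcd' : c ≠ d := fun h => by rw [h] at hcc; linarith
    apply no31 f hext ![a,b,c,d]
    · intro i
      fin_cases i
      · exact haVs
      · exact hbVs
      · exact hcVs
      · exact hdVs
    · exact inj4 hab hac had hbc hbd hcd'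
    · intro i
      fin_cases i
      · exact hbV a haVs
      · exact hbV b hbVs
      · exact hbV c hcVs
      · exact hbV d hdVs
    · intro i
      fin_cases i
      · exact hfV a haVs
      · exact hfV b hbVs
      · exact hfV c hcVs
      · exact hfV d hdVs
    · rw [Fin.prod_univ_four]
      show cval f a * cval f b * cval f c * cval f d < 0
      exact mul_neg_of_neg_of_pos (mul_neg_of_pos_of_neg (mul_pos_of_neg_of_neg hca hcb) hcc) hcd
  have hVpp : 0 < Vp.card := Finset.card_pos.2 hVpne
  have hVmp : 0 < Vm.card := Finset.card_pos.2 hVmne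
  constructor
  · omega
  · intro x hx
    have hsc := sign_coherent f hchart hx
    set comp := connectedComponentIn (P ∩ kleinH2) x with hcompdef
    have hxne : Hfun f x ≠ 0 := Hfun_ne_zero f hx.2 (hchart x hx.1)
    rcases ((Vs : Set (ℙ ℝ (Fin 3 → ℝ))) ∩ closure comp).eq_empty_or_nonempty with hT2 | ⟨v0, hv0⟩
    · rw [hT2]
      simp
    · have hv0Vs : v0 ∈ Vs := hv0.1
      have key : ∀ v, v ∈ (Vs : Set (ℙ ℝ (Fin 3 → ℝ))) ∩ closure comp →
          0 < cval f v * cval f v0 := by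
        intro v hv
        have hvVs : v ∈ Vs := hv.1
        have h1 : 0 ≤ Hfun f v * Hfun f x := hsc v hv.2
        have h2 : 0 ≤ Hfun f v0 * Hfun f x := hsc v0 hv0.2
        have hv1 : Hfun f v = cval f v / 2 := Hfun_vertex f (hbV v hvVs) (hfV v hvVs)
        have hv01 : Hfun f v0 = cval f v0 / 2 := Hfun_vertex f (hbV v0 hv0Vs) (hfV v0 hv0Vs)
        have hvne : Hfun f v ≠ 0 := by
          rw [hv1]; exact div_ne_zero (hcne v hvVs) two_ne_zero
        have hv0ne : Hfun f v0 ≠ 0 := by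
          rw [hv01]; exact div_ne_zero (hcne v0 hv0Vs) two_ne_zero
        have h1' : 0 < Hfun f v * Hfun f x :=
          lt_of_le_of_ne h1 (Ne.symm (mul_ne_zero hvne hxne))
        have h2' : 0 < Hfun f v0 * Hfun f x :=
          lt_of_le_of_ne h2 (Ne.symm (mul_ne_zero hv0ne hxne))
        have h3 : 0 < Hfun f v * Hfun f v0 :=
          pos_of_sq_mul (a := Hfun f x) (by nlinarith [mul_pos h1' h2'])
        rw [hv1, hv01] at h3
        nlinarith [h3]
      rcases (hcne v0 hv0Vs).lt_or_gt with hneg | hpos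
      · have hsub : (Vs : Set (ℙ ℝ (Fin 3 → ℝ))) ∩ closure comp ⊆ (Vm : Set (ℙ ℝ (Fin 3 → ℝ))) := by
          intro v hv
          have hvVs : v ∈ Vs := hv.1
          have hkey := key v hv
          have : cval f v < 0 := by
            by_contra hge
            push_neg at hge
            nlinarith
          rw [Finset.mem_coe, hVmdef]
          exact Finset.mem_filter.2 ⟨hvVs, this⟩
        calc ((Vs : Set (ℙ ℝ (Fin 3 → ℝ))) ∩ closure comp).ncard
            ≤ (Vm : Set (ℙ ℝ (Fin 3 → ℝ))).ncard := Set.ncard_le_ncard hsub (Vm.finite_toSet)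
          _ = Vm.card := Set.ncard_coe_finset _
          _ ≤ 2 := hVmle
      · have hsub : (Vs : Set (ℙ ℝ (Fin 3 → ℝ))) ∩ closure comp ⊆ (Vp : Set (ℙ ℝ (Fin 3 → ℝ))) := by
          intro v hv
          have hvVs : v ∈ Vs := hv.1
          have hkey := key v hv
          have : 0 < cval f v := by
            by_contra hge
            push_neg at hge
            nlinarith
          rw [Finset.mem_coe, hVpdef]
          exact Finset.mem_filter.2 ⟨hvVs, this⟩
        calc ((Vs : Set (ℙ ℝ (Fin 3 → ℝ))) ∩ closure comp).ncard
            ≤ (Vp : Set (ℙ ℝ (Fin 3 → ℝ))).ncard := Set.ncard_le_ncard hsub (Vp.finite_toSet)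
          _ = Vp.card := Set.ncard_coe_finset _
          _ ≤ 2 := hVple
end
end

section
/- Let γ: RP^1 → RP^1 be piecewise projective (piecewise in PSL(2,R)) and let x be a break point with left germ γ⁻ and right germ γ⁺ in PSL(2,R). Then γ is C¹ at x if and only if the shift D_xγ = (γ⁺)⁻¹ ∘ γ⁻ (an element of PSL(2,R) fixing x) preserves every horocycle based at x. -/
noncomputable section

open Matrix

/-- The Möbius transformation of the real line induced by a matrix in `SL(2,ℝ)`
(a representative of an element of `PSL(2,ℝ)` acting on `ℝP¹`). -/
def moebiusR (A : Matrix.SpecialLinearGroup (Fin 2) ℝ) (t : ℝ) : ℝ :=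
  ((A : Matrix (Fin 2) (Fin 2) ℝ) 0 0 * t + (A : Matrix (Fin 2) (Fin 2) ℝ) 0 1) /
    ((A : Matrix (Fin 2) (Fin 2) ℝ) 1 0 * t + (A : Matrix (Fin 2) (Fin 2) ℝ) 1 1)

/-- The Möbius transformation of the complex plane induced by a matrix in `SL(2,ℝ)`. -/
def moebiusC (A : Matrix.SpecialLinearGroup (Fin 2) ℝ) (z : ℂ) : ℂ :=
  (((A : Matrix (Fin 2) (Fin 2) ℝ) 0 0 : ℂ) * z + ((A : Matrix (Fin 2) (Fin 2) ℝ) 0 1 : ℂ)) /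
    (((A : Matrix (Fin 2) (Fin 2) ℝ) 1 0 : ℂ) * z + ((A : Matrix (Fin 2) (Fin 2) ℝ) 1 1 : ℂ))

/-- The horocycle of (Euclidean) radius `r` based at the ideal point `x ∈ ℝ = ∂H²` in the
upper half-plane model: the circle of radius `r` tangent to the real axis at `x`. -/
def horocycle (x : ℝ) (r : ℝ) : Set ℂ :=
  {z : ℂ | ‖z - (x + r * Complex.I)‖ = r}

/-!
A Möbius map `g = [[a, b], [c, d]]` of determinant one has derivative `j_g(t)⁻²`, where
`j_g(t) = c t + d`. Hence `γ`, glued at `x` from the projective maps `A` and `B`, is `C¹` at `x`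
iff its one-sided derivatives agree, i.e. iff `j_A(x)² = j_B(x)²`. On the other side, `g` sends
the horocycle of radius `r` based at `x` to the horocycle of radius `r / |j_g(x)|²` based at
`g x`, so the shift `C = B⁻¹ A`, which fixes `x`, preserves all horocycles at `x` iff
`|j_C(x)| = 1`. The cocycle identity `j_{BC}(x) = j_B(C x) j_C(x)` applied to `A = B C` gives
`j_A(x) = j_B(x) j_C(x)`, so the two conditions coincide.
-/

open Set Filter Topology

open scoped MatrixGroups

section Gluing

variable {f g h : ℝ → ℝ} {x : ℝ}

theorem hasDerivAt_ite_le {y : ℝ} (hg : DifferentiableAt ℝ g y)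
    (hh : DifferentiableAt ℝ h y) (hgh : g x = h x) (hd : deriv g x = deriv h x) :
    HasDerivAt (fun z => if z ≤ x then g z else h z)
      (if y ≤ x then deriv g y else deriv h y) y := by
  rcases lt_trichotomy y x with hlt | rfl | hgt
  · rw [if_pos hlt.le]
    refine hg.hasDerivAt.congr_of_eventuallyEq ?_
    filter_upwards [Iic_mem_nhds hlt] with z hz using if_pos hz
  · rw [if_pos le_rfl]
    have hleft : HasDerivWithinAt (fun z => if z ≤ y then g z else h z) (deriv g y) (Iic y) y :=
      hg.hasDerivAt.hasDerivWithinAt.congr (fun z hz => if_pos hz) (if_pos le_rfl)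
    have hright :
        HasDerivWithinAt (fun z => if z ≤ y then g z else h z) (deriv g y) (Ici y) y := by
      rw [hd]
      refine hh.hasDerivAt.hasDerivWithinAt.congr (fun z hz => ?_) (by rw [if_pos le_rfl, hgh])
      rcases (mem_Ici.1 hz).eq_or_lt with rfl | hlt
      · rw [if_pos le_rfl, hgh]
      · exact if_neg (not_le.2 hlt)
    simpa [Iic_union_Ici] using hleft.union hright
  · rw [if_neg (not_le.2 hgt)]
    refine hh.hasDerivAt.congr_of_eventuallyEq ?_
    filter_upwards [Ioi_mem_nhds hgt] with z hz using if_neg (not_le.2 hz)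

theorem ContDiffOn.ite_le {u : Set ℝ} (hu : IsOpen u) (hg : ContDiffOn ℝ 1 g u)
    (hh : ContDiffOn ℝ 1 h u) (hgh : g x = h x) (hd : deriv g x = deriv h x) :
    ContDiffOn ℝ 1 (fun z => if z ≤ x then g z else h z) u := by
  have hderiv : ∀ y ∈ u, HasDerivAt (fun z => if z ≤ x then g z else h z)
      (if y ≤ x then deriv g y else deriv h y) y := fun y hy =>
    hasDerivAt_ite_le ((hg.differentiableOn one_ne_zero).differentiableAt (hu.mem_nhds hy))
      ((hh.differentiableOn one_ne_zero).differentiableAt (hu.mem_nhds hy)) hgh hd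
  have hcont : ContinuousOn (fun y => if y ≤ x then deriv g y else deriv h y) u := by
    refine ContinuousOn.if (fun y hy => ?_) ?_ ?_
    · rw [show {a : ℝ | a ≤ x} = Iic x from rfl, frontier_Iic] at hy
      rw [hy.2, hd]
    · exact (hg.continuousOn_deriv_of_isOpen hu le_rfl).mono inter_subset_left
    · exact (hh.continuousOn_deriv_of_isOpen hu le_rfl).mono inter_subset_left
  rw [contDiffOn_one_iff_derivWithin hu.uniqueDiffOn]
  refine ⟨fun y hy => (hderiv y hy).differentiableAt.differentiableWithinAt,
    hcont.congr fun y hy => ?_⟩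
  exact (hderiv y hy).hasDerivWithinAt.derivWithin (hu.uniqueDiffOn y hy)

theorem contDiffAt_one_iff_deriv_eq_of_eventuallyEq (hg : ContDiffAt ℝ 1 g x)
    (hh : ContDiffAt ℝ 1 h x) (hfg : f =ᶠ[𝓝[≤] x] g) (hfh : f =ᶠ[𝓝[≥] x] h) :
    ContDiffAt ℝ 1 f x ↔ deriv g x = deriv h x := by
  have hfgx : f x = g x := hfg.eq_of_nhdsWithin self_mem_Iic
  have hfhx : f x = h x := hfh.eq_of_nhdsWithin self_mem_Ici
  constructor
  · intro hf
    have hfd := hf.differentiableAt one_ne_zero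
    calc deriv g x = derivWithin g (Iic x) x :=
          ((hg.differentiableAt one_ne_zero).derivWithin (uniqueDiffWithinAt_Iic x)).symm
      _ = derivWithin f (Iic x) x := (hfg.derivWithin_eq hfgx).symm
      _ = deriv f x := hfd.derivWithin (uniqueDiffWithinAt_Iic x)
      _ = derivWithin f (Ici x) x := (hfd.derivWithin (uniqueDiffWithinAt_Ici x)).symm
      _ = derivWithin h (Ici x) x := hfh.derivWithin_eq hfhx
      _ = deriv h x := (hh.differentiableAt one_ne_zero).derivWithin (uniqueDiffWithinAt_Ici x)
  · intro hd
    obtain ⟨u, hu, hgu⟩ := hg.contDiffOn le_rfl (by simp)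
    obtain ⟨v, hv, hhv⟩ := hh.contDiffOn le_rfl (by simp)
    have hglue := (hgu.mono (interior_subset.trans inter_subset_left)).ite_le isOpen_interior
      (hhv.mono (interior_subset.trans inter_subset_right)) (hfgx.symm.trans hfhx) hd
    refine (hglue.contDiffAt (interior_mem_nhds.2 (inter_mem hu hv))).congr_of_eventuallyEq ?_
    have hle := eventually_nhdsWithin_iff.1 hfg
    have hge := eventually_nhdsWithin_iff.1 hfh
    filter_upwards [hle, hge] with y hyg hyh
    split_ifs with hy
    exacts [hyg hy, hyh (le_of_not_ge hy)]

end Gluing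

theorem SL2_det_fin_two {R : Type*} [CommRing R] (g : SL(2, R)) :
    g 0 0 * g 1 1 - g 0 1 * g 1 0 = 1 := by
  have h := g.det_coe
  rwa [Matrix.det_fin_two] at h

def moebiusDenom (g : SL(2, ℝ)) (z : ℂ) : ℂ := (g 1 0 : ℂ) * z + g 1 1

theorem moebiusC_ofReal (g : SL(2, ℝ)) (t : ℝ) : moebiusC g t = moebiusR g t := by
  simp [moebiusC, moebiusR]

theorem moebiusDenom_ofReal (g : SL(2, ℝ)) (t : ℝ) :
    moebiusDenom g t = ↑(g 1 0 * t + g 1 1) := by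
  simp [moebiusDenom]

@[simp] theorem moebiusC_one (z : ℂ) : moebiusC 1 z = z := by simp [moebiusC]

@[simp] theorem moebiusDenom_one (z : ℂ) : moebiusDenom 1 z = 1 := by simp [moebiusDenom]

theorem moebiusDenom_mul (g h : SL(2, ℝ)) {z : ℂ} (hz : moebiusDenom h z ≠ 0) :
    moebiusDenom (g * h) z = moebiusDenom g (moebiusC h z) * moebiusDenom h z := by
  simp only [moebiusDenom] at hz ⊢
  simp only [moebiusC, Matrix.SpecialLinearGroup.coe_mul, Matrix.mul_apply, Fin.sum_univ_two]
  push_cast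
  field_simp
  ring

theorem moebiusC_mul (g h : SL(2, ℝ)) {z : ℂ} (hz : moebiusDenom h z ≠ 0) :
    moebiusC (g * h) z = moebiusC g (moebiusC h z) := by
  have hnum : ((g * h : SL(2, ℝ)) 0 0 : ℂ) * z + (g * h : SL(2, ℝ)) 0 1 =
      ((g 0 0 : ℂ) * moebiusC h z + g 0 1) * moebiusDenom h z := by
    simp only [moebiusDenom] at hz ⊢
    simp only [moebiusC, Matrix.SpecialLinearGroup.coe_mul, Matrix.mul_apply, Fin.sum_univ_two]
    push_cast
    field_simp
    ring
  change _ / moebiusDenom (g * h) z = _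
  rw [moebiusDenom_mul _ _ hz, hnum, mul_div_mul_right _ _ hz]
  rfl

theorem moebiusDenom_inv_mul_moebiusDenom (g : SL(2, ℝ)) {z : ℂ} (hz : moebiusDenom g z ≠ 0) :
    moebiusDenom g⁻¹ (moebiusC g z) * moebiusDenom g z = 1 := by
  rw [← moebiusDenom_mul _ _ hz, inv_mul_cancel, moebiusDenom_one]

theorem moebiusC_inv_moebiusC (g : SL(2, ℝ)) {z : ℂ} (hz : moebiusDenom g z ≠ 0) :
    moebiusC g⁻¹ (moebiusC g z) = z := by
  rw [← moebiusC_mul _ _ hz, inv_mul_cancel, moebiusC_one]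

theorem moebiusC_sub_moebiusC (g : SL(2, ℝ)) {z w : ℂ} (hz : moebiusDenom g z ≠ 0)
    (hw : moebiusDenom g w ≠ 0) :
    moebiusC g z - moebiusC g w = (z - w) / (moebiusDenom g z * moebiusDenom g w) := by
  have hdet : (g 0 0 * g 1 1 - g 0 1 * g 1 0 : ℂ) = 1 := by exact_mod_cast SL2_det_fin_two g
  simp only [moebiusDenom] at hz hw
  rw [moebiusC, moebiusC, moebiusDenom, moebiusDenom, div_sub_div _ _ hz hw,
    div_eq_div_iff (mul_ne_zero hz hw) (mul_ne_zero hz hw)]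
  linear_combination (z - w) * ((g 1 0 : ℂ) * z + g 1 1) * ((g 1 0 : ℂ) * w + g 1 1) * hdet

theorem im_moebiusC (g : SL(2, ℝ)) (z : ℂ) :
    (moebiusC g z).im = z.im / Complex.normSq (moebiusDenom g z) := by
  rw [moebiusC, Complex.div_im, moebiusDenom, div_sub_div_same]
  congr 1
  simp only [Complex.add_re, Complex.add_im, Complex.mul_re, Complex.mul_im,
    Complex.ofReal_re, Complex.ofReal_im]
  linear_combination z.im * SL2_det_fin_two g

theorem mem_horocycle_iff {x r : ℝ} (hr : 0 < r) {z : ℂ} :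
    z ∈ horocycle x r ↔ Complex.normSq (z - x) = 2 * r * z.im := by
  rw [horocycle, mem_ofPred_eq, ← sq_eq_sq₀ (norm_nonneg _) hr.le, Complex.sq_norm,
    Complex.normSq_apply, Complex.normSq_apply]
  simp only [Complex.sub_re, Complex.sub_im, Complex.add_re, Complex.add_im, Complex.ofReal_re,
    Complex.ofReal_im, Complex.mul_re, Complex.mul_im, Complex.I_re, Complex.I_im]
  constructor <;> intro h <;> linarith

theorem eq_of_mem_horocycle_of_im_eq_zero {x r : ℝ} (hr : 0 < r) {z : ℂ}
    (hz : z ∈ horocycle x r) (him : z.im = 0) : z = x := by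
  rw [mem_horocycle_iff hr, him, mul_zero, Complex.normSq_eq_zero, sub_eq_zero] at hz
  exact hz

/-- A denominator `c z + d` with real `c, d` vanishes only at a real point, and the only real point
of a horocycle is its base point. -/
theorem moebiusDenom_ne_zero_of_mem_horocycle {g : SL(2, ℝ)} {x r : ℝ} (hr : 0 < r)
    (hx : moebiusDenom g x ≠ 0) {z : ℂ} (hz : z ∈ horocycle x r) :
    moebiusDenom g z ≠ 0 := by
  intro h0
  have him : g 1 0 * z.im = 0 := by simpa [moebiusDenom] using congrArg Complex.im h0
  rcases mul_eq_zero.1 him with hc | him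
  · exact hx (by simpa [moebiusDenom, hc] using h0)
  · exact hx (eq_of_mem_horocycle_of_im_eq_zero hr hz him ▸ h0)

theorem mapsTo_moebiusC_horocycle {g : SL(2, ℝ)} {x y r : ℝ} (hr : 0 < r)
    (hx : moebiusDenom g x ≠ 0) (hy : moebiusC g x = y) :
    MapsTo (moebiusC g) (horocycle x r)
      (horocycle y (r / Complex.normSq (moebiusDenom g x))) := by
  intro z hz
  have hzd := moebiusDenom_ne_zero_of_mem_horocycle hr hx hz
  have hNz := Complex.normSq_pos.2 hzd
  have hNx := Complex.normSq_pos.2 hx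
  rw [mem_horocycle_iff hr] at hz
  rw [mem_horocycle_iff (by positivity), ← hy, moebiusC_sub_moebiusC g hzd hx, im_moebiusC,
    Complex.normSq_div, Complex.normSq_mul, hz]
  field_simp

theorem eq_of_horocycle_subset {x r s : ℝ} (hr : 0 < r) (h : horocycle x r ⊆ horocycle x s) :
    r = s := by
  have hdist : ∀ t u : ℝ, ‖(x + t * Complex.I : ℂ) - (x + u * Complex.I)‖ = |t - u| := by
    intro t u
    rw [show (x + t * Complex.I : ℂ) - (x + u * Complex.I) = ((t - u : ℝ) : ℂ) * Complex.I by
      push_cast; ring, norm_mul, Complex.norm_I, mul_one, Complex.norm_real, Real.norm_eq_abs]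
  have htop : (x + (2 * r : ℝ) * Complex.I : ℂ) ∈ horocycle x r := by
    rw [horocycle, mem_ofPred_eq, hdist, two_mul, add_sub_cancel_right, abs_of_pos hr]
  have hs := h htop
  rw [horocycle, mem_ofPred_eq, hdist] at hs
  rcases (abs_eq (hs ▸ abs_nonneg _)).1 hs with h' | h' <;> linarith

theorem image_moebiusC_horocycle_eq_iff {g : SL(2, ℝ)} {x : ℝ} (hx : moebiusDenom g x ≠ 0)
    (hfix : moebiusC g x = x) :
    (∀ r > 0, moebiusC g '' horocycle x r = horocycle x r) ↔
      Complex.normSq (moebiusDenom g x) = 1 := by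
  constructor
  · intro h
    have hsub := (mapsTo_moebiusC_horocycle one_pos hx hfix).image_subset
    rw [h 1 one_pos] at hsub
    have h1 := eq_of_horocycle_subset one_pos hsub
    rwa [eq_div_iff (Complex.normSq_pos.2 hx).ne', one_mul] at h1
  · intro hN r hr
    have hinv : moebiusDenom g⁻¹ x * moebiusDenom g x = 1 := by
      simpa [hfix] using moebiusDenom_inv_mul_moebiusDenom g hx
    have hNinv : Complex.normSq (moebiusDenom g⁻¹ x) = 1 := by
      simpa [hN] using congrArg Complex.normSq hinv
    have hfix' : moebiusC g⁻¹ x = x := by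
      simpa [hfix] using moebiusC_inv_moebiusC g hx
    have hx' : moebiusDenom g⁻¹ x ≠ 0 := left_ne_zero_of_mul_eq_one hinv
    refine (mapsTo_moebiusC_horocycle hr hx hfix).image_subset.trans (by rw [hN, div_one])
      |>.antisymm fun w hw => ⟨moebiusC g⁻¹ w, ?_, ?_⟩
    · simpa [hNinv] using mapsTo_moebiusC_horocycle hr hx' hfix' hw
    · simpa using moebiusC_inv_moebiusC g⁻¹ (moebiusDenom_ne_zero_of_mem_horocycle hr hx' hw)

theorem moebiusC_inv_mul_eq_self {A B : SL(2, ℝ)} {z : ℂ} (hA : moebiusDenom A z ≠ 0)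
    (hB : moebiusDenom B z ≠ 0) (hAB : moebiusC A z = moebiusC B z) :
    moebiusC (B⁻¹ * A) z = z := by
  rw [moebiusC_mul _ _ hA, hAB, moebiusC_inv_moebiusC B hB]

theorem moebiusDenom_eq_mul_moebiusDenom_inv_mul {A B : SL(2, ℝ)} {z : ℂ}
    (hA : moebiusDenom A z ≠ 0) (hB : moebiusDenom B z ≠ 0)
    (hAB : moebiusC A z = moebiusC B z) :
    moebiusDenom A z = moebiusDenom B z * moebiusDenom (B⁻¹ * A) z := by
  have hC : moebiusDenom (B⁻¹ * A) z ≠ 0 := by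
    rw [moebiusDenom_mul _ _ hA, hAB]
    exact mul_ne_zero (left_ne_zero_of_mul_eq_one (moebiusDenom_inv_mul_moebiusDenom B hB)) hA
  calc moebiusDenom A z = moebiusDenom (B * (B⁻¹ * A)) z := by rw [mul_inv_cancel_left]
    _ = moebiusDenom B z * moebiusDenom (B⁻¹ * A) z := by
      rw [moebiusDenom_mul _ _ hC, moebiusC_inv_mul_eq_self hA hB hAB]

theorem hasDerivAt_moebiusR (g : SL(2, ℝ)) {t : ℝ} (ht : g 1 0 * t + g 1 1 ≠ 0) :
    HasDerivAt (moebiusR g) ((g 1 0 * t + g 1 1) ^ 2)⁻¹ t := by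
  have hnum : HasDerivAt (fun s => g 0 0 * s + g 0 1) (g 0 0) t := by
    simpa using ((hasDerivAt_id t).const_mul (g 0 0)).add_const (g 0 1)
  have hden : HasDerivAt (fun s => g 1 0 * s + g 1 1) (g 1 0) t := by
    simpa using ((hasDerivAt_id t).const_mul (g 1 0)).add_const (g 1 1)
  refine (hnum.div hden ht).congr_deriv ?_
  rw [inv_eq_one_div, div_eq_div_iff (by positivity) (by positivity)]
  linear_combination (g 1 0 * t + g 1 1) ^ 2 * SL2_det_fin_two g

theorem contDiffAt_moebiusR (g : SL(2, ℝ)) {t : ℝ} {n : WithTop ℕ∞}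
    (ht : g 1 0 * t + g 1 1 ≠ 0) :
    ContDiffAt ℝ n (moebiusR g) t := by
  unfold moebiusR
  fun_prop (disch := exact ht)

/-- Let `γ` be a piecewise projective map of `ℝP¹`, equal to the Möbius
map of `A ∈ PSL(2,ℝ)` on the left of the break point `x` and to that of `B ∈ PSL(2,ℝ)` on
the right (with matching values and no poles nearby).  Then `γ` is `C¹` at `x` if and only
if the shift `D_xγ = B⁻¹ * A` preserves every horocycle based at `x`. -/
theorem cpp_C1_iff_shift_preserves_horocycles
    (γ : ℝ → ℝ) (x : ℝ) (A B : Matrix.SpecialLinearGroup (Fin 2) ℝ) (ε : ℝ) (hε : 0 < ε)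
    (hL : ∀ t ∈ Set.Ioo (x - ε) x, γ t = moebiusR A t)
    (hR : ∀ t ∈ Set.Ico x (x + ε), γ t = moebiusR B t)
    (hLpole : ∀ t ∈ Set.Ioc (x - ε) x,
      (A : Matrix (Fin 2) (Fin 2) ℝ) 1 0 * t + (A : Matrix (Fin 2) (Fin 2) ℝ) 1 1 ≠ 0)
    (hRpole : ∀ t ∈ Set.Ico x (x + ε),
      (B : Matrix (Fin 2) (Fin 2) ℝ) 1 0 * t + (B : Matrix (Fin 2) (Fin 2) ℝ) 1 1 ≠ 0)
    (hval : moebiusR A x = moebiusR B x) :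
    ContDiffAt ℝ 1 γ x ↔
      ∀ r > 0, moebiusC (B⁻¹ * A) '' horocycle x r = horocycle x r := by
  have hAx := hLpole x ⟨by linarith, le_rfl⟩
  have hBx := hRpole x ⟨le_rfl, by linarith⟩
  have hAx' : moebiusDenom A x ≠ 0 := by rw [moebiusDenom_ofReal]; exact_mod_cast hAx
  have hBx' : moebiusDenom B x ≠ 0 := by rw [moebiusDenom_ofReal]; exact_mod_cast hBx
  have hAB : moebiusC A x = moebiusC B x := by rw [moebiusC_ofReal, moebiusC_ofReal, hval]
  have hden := moebiusDenom_eq_mul_moebiusDenom_inv_mul hAx' hBx' hAB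
  have hleft : γ =ᶠ[𝓝[≤] x] moebiusR A := by
    filter_upwards [Ioc_mem_nhdsLE (by linarith : x - ε < x)] with t ht
    rcases ht.2.eq_or_lt with rfl | hlt
    exacts [(hR t ⟨le_rfl, by linarith⟩).trans hval.symm, hL t ⟨ht.1, hlt⟩]
  have hright : γ =ᶠ[𝓝[≥] x] moebiusR B := by
    filter_upwards [Ico_mem_nhdsGE (by linarith : x < x + ε)] with t ht using hR t ht
  rw [contDiffAt_one_iff_deriv_eq_of_eventuallyEq (contDiffAt_moebiusR A hAx)
      (contDiffAt_moebiusR B hBx) hleft hright, (hasDerivAt_moebiusR A hAx).deriv,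
    (hasDerivAt_moebiusR B hBx).deriv, _root_.inv_inj, image_moebiusC_horocycle_eq_iff
      (right_ne_zero_of_mul (hden ▸ hAx')) (moebiusC_inv_mul_eq_self hAx' hBx' hAB)]
  have hN := congrArg Complex.normSq hden
  rw [Complex.normSq_mul, moebiusDenom_ofReal, moebiusDenom_ofReal, Complex.normSq_ofReal,
    Complex.normSq_ofReal] at hN
  rw [sq, sq, hN, mul_eq_left₀ (mul_ne_zero hBx hBx)]
end
end

section
/- In the upper half-plane model of H², fix ideal points b_{i-1}, b_{i+1} on the real axis and b_i = ∞. Let s_{i-1}, s_i be points on circles (hyperbolic geodesic-perpendicular loci) centered at b_{i-1}, b_{i+1} at hyperbolic distances δ_{i-1}, δ_i from the geodesics b_{i-1}b_{i+1}. If the points are moved along the perpendicular geodesics to new positions with distances δ'_{i-1}, δ'_i satisfying cosh δ_{i-1}/cosh δ'_{i-1} = cosh δ_i/cosh δ'_i, then the new points s'_{i-1} and s'_i lie at the same Euclidean height, hence on a common horocycle based at b_i = ∞. -/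
noncomputable section

open Complex

/-! A point `b + R e^{iψ}` has height `R sin ψ = R / cosh δ`, so the horocycle condition
reads `R₁ / cosh δ₁ = R₂ / cosh δ₂`; multiplying both sides by the common ratio
`cosh δ₁ / cosh δ₁' = cosh δ₂ / cosh δ₂'` gives the same identity for the moved points. -/

theorem Complex.im_ofReal_add_ofReal_mul_exp_mul_I (b R ψ : ℝ) :
    ((b : ℂ) + R * exp (ψ * I)).im = R * Real.sin ψ := by
  simp [exp_mul_I, ← ofReal_sin]

theorem im_add_mul_exp_eq_div_cosh {b R δ ψ : ℝ} (h : Real.cosh δ * Real.sin ψ = 1) :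
    ((b : ℂ) + R * exp (ψ * I)).im = R / Real.cosh δ := by
  rw [Complex.im_ofReal_add_ofReal_mul_exp_mul_I, div_eq_mul_inv,
    eq_inv_of_mul_eq_one_right h]

theorem div_eq_div_of_div_eq_div_of_ratio_eq {G : Type*} [CommGroupWithZero G]
    {a₁ a₂ c₁ c₂ c₁' c₂' : G} (hc₁ : c₁ ≠ 0) (hc₂ : c₂ ≠ 0)
    (h : a₁ / c₁ = a₂ / c₂) (hratio : c₁ / c₁' = c₂ / c₂') :
    a₁ / c₁' = a₂ / c₂' := by
  rw [← div_mul_div_cancel₀ (c := c₁') hc₁, ← div_mul_div_cancel₀ (c := c₂') hc₂, h, hratio]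

theorem same_horocycle_after_cosh_ratio_move_general
    (b₁ b₂ R₁ R₂ δ₁ δ₂ δ₁' δ₂' ψ₁ ψ₂ ψ₁' ψ₂' : ℝ)
    (hψ₁ : Real.cosh δ₁ * Real.sin ψ₁ = 1) (hψ₂ : Real.cosh δ₂ * Real.sin ψ₂ = 1)
    (hψ₁' : Real.cosh δ₁' * Real.sin ψ₁' = 1) (hψ₂' : Real.cosh δ₂' * Real.sin ψ₂' = 1)
    (hratio : Real.cosh δ₁ / Real.cosh δ₁' = Real.cosh δ₂ / Real.cosh δ₂')
    (s₁ s₂ s₁' s₂' : ℂ)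
    (hs₁ : s₁ = (b₁ : ℂ) + R₁ * Complex.exp (ψ₁ * Complex.I))
    (hs₂ : s₂ = (b₂ : ℂ) + R₂ * Complex.exp (ψ₂ * Complex.I))
    (hs₁' : s₁' = (b₁ : ℂ) + R₁ * Complex.exp (ψ₁' * Complex.I))
    (hs₂' : s₂' = (b₂ : ℂ) + R₂ * Complex.exp (ψ₂' * Complex.I))
    (hsame : s₁.im = s₂.im) :
    s₁'.im = s₂'.im := by
  rw [hs₁, hs₂, im_add_mul_exp_eq_div_cosh hψ₁, im_add_mul_exp_eq_div_cosh hψ₂] at hsame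
  rw [hs₁', hs₂', im_add_mul_exp_eq_div_cosh hψ₁', im_add_mul_exp_eq_div_cosh hψ₂']
  exact div_eq_div_of_div_eq_div_of_ratio_eq (Real.cosh_pos δ₁).ne' (Real.cosh_pos δ₂).ne'
    hsame hratio

/-- In the upper half-plane model with `b_i = ∞` and ideal points
`b_{i-1}, b_{i+1}` on the real axis, let `s_{i-1}, s_i` lie on Euclidean circles centered
at `b_{i-1}, b_{i+1}` at hyperbolic distances `δ_{i-1}, δ_i` from the corresponding
geodesics, the Euclidean angles `ψ` satisfying `cosh δ · sin ψ = 1`.  If both points lie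
on a common horocycle based at `∞` (same Euclidean height) and they are moved along the
perpendicular geodesics to new positions with `cosh δ_{i-1}/cosh δ'_{i-1} =
cosh δ_i/cosh δ'_i`, then the new points have the same Euclidean height, hence lie on a
common horocycle based at `b_i = ∞`. -/
theorem same_horocycle_after_cosh_ratio_move
    (b₁ b₂ R₁ R₂ δ₁ δ₂ δ₁' δ₂' ψ₁ ψ₂ ψ₁' ψ₂' : ℝ)
    (hR₁ : 0 < R₁) (hR₂ : 0 < R₂)
    (hψ₁ : Real.cosh δ₁ * Real.sin ψ₁ = 1) (hψ₂ : Real.cosh δ₂ * Real.sin ψ₂ = 1)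
    (hψ₁' : Real.cosh δ₁' * Real.sin ψ₁' = 1) (hψ₂' : Real.cosh δ₂' * Real.sin ψ₂' = 1)
    (hratio : Real.cosh δ₁ / Real.cosh δ₁' = Real.cosh δ₂ / Real.cosh δ₂')
    (s₁ s₂ s₁' s₂' : ℂ)
    (hs₁ : s₁ = (b₁ : ℂ) + R₁ * Complex.exp (ψ₁ * Complex.I))
    (hs₂ : s₂ = (b₂ : ℂ) + R₂ * Complex.exp (ψ₂ * Complex.I))
    (hs₁' : s₁' = (b₁ : ℂ) + R₁ * Complex.exp (ψ₁' * Complex.I))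
    (hs₂' : s₂' = (b₂ : ℂ) + R₂ * Complex.exp (ψ₂' * Complex.I))
    (hsame : s₁.im = s₂.im) :
    s₁'.im = s₂'.im :=
  same_horocycle_after_cosh_ratio_move_general b₁ b₂ R₁ R₂ δ₁ δ₂ δ₁' δ₂' ψ₁ ψ₂ ψ₁' ψ₂' hψ₁ hψ₂ hψ₁'
    hψ₂' hratio s₁ s₂ s₁' s₂' hs₁ hs₂ hs₁' hs₂' hsame
end
end

section
/- Let G = (V, E) be a finite graph with edges colored red and blue, and suppose there is a weight function w: E → R with w > 0 on red edges, w < 0 on blue edges, and for every vertex v the sum of w over the edges incident to v equals 0. Then every edge of G belongs to a closed walk along which the colors of edges alternate red, blue, red, blue, ... -/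
/-!
Treat the darts (oriented edges) as states, a dart `d` being followed by any dart that leaves
the head of `d` in the other colour, and give each dart the mass `|w|` of its edge. The zero
sums say that at every vertex the red and the blue darts carry equal mass, so the mass of the
darts entering a vertex in one colour equals that of the darts leaving it in the other. The set
of darts reachable from a dart `d₀` is closed under successors; if `d₀` were not among its own
successors, pushing the reachable set forward would lose the positive mass of `d₀`. Hence `d₀`
lies on a cycle of states, which is a closed alternating walk through its edge.
-/

variable {V : Type*}

/-- A list of colored edges is cyclically alternating: it is nonempty, consecutive edges
have different colors, and so do the last and the first edge. -/
def CyclicAlt (c : Sym2 V → Bool) (l : List (Sym2 V)) : Prop :=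
  l ≠ [] ∧ List.Chain' (fun e f => c e ≠ c f) l ∧
    ∀ h : l ≠ [], c (l.getLast h) ≠ c (l.head h)

open Finset Relation

theorem transGen_self_of_sum_fiber_eq {α β M : Type*} [Fintype α] [DecidableEq β]
    [AddCommMonoid M] [PartialOrder M] [IsOrderedCancelAddMonoid M]
    (gIn gOut : α → β) (f : α → M) (hf : ∀ a, 0 ≤ f a)
    (hbal : ∀ b, ∑ a with gIn a = b, f a = ∑ a with gOut a = b, f a)
    {a₀ : α} (ha₀ : 0 < f a₀) :
    TransGen (fun a a' => gIn a = gOut a') a₀ a₀ := by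
  classical
  set S : Finset α := {a | ReflTransGen (fun a a' => gIn a = gOut a') a₀ a}
  set T := S.image gIn
  have hSmem : ∀ {a}, a ∈ S ↔ ReflTransGen (fun a a' => gIn a = gOut a') a₀ a := by
    simp [S]
  by_contra hcyc
  have hnotT : gOut a₀ ∉ T := by
    simp only [T, mem_image, hSmem]
    rintro ⟨a₁, h₀₁, h₁₀⟩
    exact hcyc (TransGen.tail' h₀₁ h₁₀)
  have hsub : S ⊆ ({a | gIn a ∈ T} : Finset α) :=
    fun a ha => mem_filter.2 ⟨mem_univ a, mem_image_of_mem gIn ha⟩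
  have hsub_erase : ({a | gOut a ∈ T} : Finset α) ⊆ S.erase a₀ := by
    intro a ha
    have hT : gOut a ∈ T := (mem_filter.1 ha).2
    obtain ⟨a', ha', heq⟩ := mem_image.1 hT
    exact mem_erase.2 ⟨by rintro rfl; exact hnotT hT, hSmem.2 ((hSmem.1 ha').tail heq)⟩
  have hbalT : ∑ a with gIn a ∈ T, f a = ∑ a with gOut a ∈ T, f a := by
    rw [← sum_fiberwise_eq_sum_filter, ← sum_fiberwise_eq_sum_filter]
    exact sum_congr rfl fun b _ => hbal b
  have : f a₀ + ∑ a ∈ S.erase a₀, f a ≤ ∑ a ∈ S.erase a₀, f a :=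
    calc f a₀ + ∑ a ∈ S.erase a₀, f a = ∑ a ∈ S, f a := add_sum_erase _ _ (hSmem.2 .refl)
      _ ≤ ∑ a with gIn a ∈ T, f a := sum_le_sum_of_subset_of_nonneg hsub fun a _ _ => hf a
      _ = ∑ a with gOut a ∈ T, f a := hbalT
      _ ≤ ∑ a ∈ S.erase a₀, f a := sum_le_sum_of_subset_of_nonneg hsub_erase fun a _ _ => hf a
  exact ha₀.not_ge (add_le_iff_nonpos_left.1 this)

theorem cyclicAlt_of_head?_of_getLast? {c : Sym2 V → Bool} {l : List (Sym2 V)}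
    {e e' : Sym2 V} (hl : l.IsChain (fun e f => c e ≠ c f)) (he : l.head? = some e)
    (he' : l.getLast? = some e') (hc : c e' ≠ c e) : CyclicAlt c l := by
  have hne : l ≠ [] := by rintro rfl; simp at he
  refine ⟨hne, hl, fun h => ?_⟩
  rwa [(List.getLast_eq_iff_getLast?_eq_some h).2 he', (List.head_eq_iff_head?_eq_some h).2 he]

namespace SimpleGraph

variable {G : SimpleGraph V}

theorem exists_walk_edges_isChain_of_reflTransGen (c : Sym2 V → Bool) {d₀ d : G.Dart}
    (h : ReflTransGen (fun d d' : G.Dart => (d.snd, c d.edge) = (d'.fst, !c d'.edge)) d₀ d) :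
    ∃ p : G.Walk d₀.fst d.snd, p.edges.IsChain (fun e f => c e ≠ c f) ∧
      p.edges.head? = some d₀.edge ∧ p.edges.getLast? = some d.edge := by
  induction h with
  | refl => exact ⟨.cons d₀.adj .nil, List.isChain_singleton _, rfl, rfl⟩
  | @tail d d' _ hstep ih =>
    obtain ⟨p, hchain, hhead, hlast⟩ := ih
    obtain ⟨hv, hc⟩ := Prod.mk.inj hstep
    have hne : p.edges ≠ [] := by rintro h; simp [h] at hhead
    refine ⟨(p.copy rfl hv).concat d'.adj, ?_, ?_, ?_⟩
    · rw [Walk.edges_concat, Walk.edges_copy, List.concat_eq_append]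
      refine hchain.append (List.isChain_singleton _) ?_
      simp only [hlast, List.head?_cons, Option.mem_def, Option.some.injEq, forall_eq']
      exact hc ▸ Bool.not_ne_self _
    · rw [Walk.edges_concat, Walk.edges_copy, List.concat_eq_append,
        List.head?_append_of_ne_nil _ hne, hhead]
    · rw [Walk.edges_concat, Walk.edges_copy, List.concat_eq_append, List.getLast?_concat]
      rfl

theorem exists_cyclicAlt_walk_of_transGen (c : Sym2 V → Bool) {d₀ : G.Dart}
    (h : TransGen (fun d d' : G.Dart => (d.snd, c d.edge) = (d'.fst, !c d'.edge)) d₀ d₀) :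
    ∃ p : G.Walk d₀.fst d₀.fst, CyclicAlt c p.edges ∧ d₀.edge ∈ p.edges := by
  obtain ⟨d₁, h₀₁, h₁₀⟩ := TransGen.tail'_iff.1 h
  obtain ⟨p, hchain, hhead, hlast⟩ := exists_walk_edges_isChain_of_reflTransGen c h₀₁
  obtain ⟨hv, hc⟩ := Prod.mk.inj h₁₀
  refine ⟨p.copy rfl hv, ?_, ?_⟩
  · rw [Walk.edges_copy]
    exact cyclicAlt_of_head?_of_getLast? hchain hhead hlast (hc ▸ Bool.not_ne_self _)
  · rw [Walk.edges_copy]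
    exact List.mem_of_mem_head? hhead

variable [Fintype V] [DecidableEq V] [DecidableRel G.Adj]

theorem sum_darts_snd_eq_sum_neighborFinset {M : Type*} [AddCommMonoid M]
    (F : Sym2 V → M) (v : V) :
    ∑ d : G.Dart with d.snd = v, F d.edge = ∑ u ∈ G.neighborFinset v, F s(u, v) := by
  refine sum_nbij (fun d : G.Dart => d.fst) ?_ ?_ ?_ ?_
  · intro d hd
    rw [mem_filter] at hd
    simpa [← hd.2] using d.adj.symm
  · intro d hd d' hd' h
    simp only [coe_filter, mem_univ, true_and, Set.mem_ofPred_eq] at hd hd'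
    exact Dart.ext _ _ (Prod.ext h (hd.trans hd'.symm))
  · intro u hu
    rw [coe_neighborFinset, mem_neighborSet] at hu
    exact ⟨⟨(u, v), hu.symm⟩, by simp, rfl⟩
  · intro d hd
    rw [← (mem_filter.1 hd).2]
    rfl

theorem sum_darts_fst_not_eq_sum_darts_snd {M : Type*} [AddCommMonoid M]
    (c : Sym2 V → Bool) (F : Sym2 V → M) (u : V) (b : Bool) :
    ∑ d : G.Dart with (d.fst, !c d.edge) = (u, b), F d.edge =
      ∑ d : G.Dart with (d.snd, c d.edge) = (u, !b), F d.edge := by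
  refine sum_nbij' Dart.symm Dart.symm ?_ ?_ (fun d _ => d.symm_symm) (fun d _ => d.symm_symm)
    (fun d _ => by simp)
  all_goals
    intro d hd
    simp only [mem_filter, mem_univ, true_and, Prod.mk.injEq, Dart.symm_toProd, Prod.fst_swap,
      Prod.snd_swap, Dart.edge_symm, Bool.not_eq_eq_eq_not] at hd ⊢
    exact hd

theorem sum_abs_darts_snd_eq_sum_abs_darts_fst (c : Sym2 V → Bool) (w : Sym2 V → ℝ)
    (hred : ∀ e ∈ G.edgeSet, c e = true → 0 < w e)
    (hblue : ∀ e ∈ G.edgeSet, c e = false → w e < 0)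
    (hsum : ∀ v : V, ∑ u ∈ G.neighborFinset v, w s(u, v) = 0) (u : V) (b : Bool) :
    ∑ d : G.Dart with (d.snd, c d.edge) = (u, b), |w d.edge| =
      ∑ d : G.Dart with (d.fst, !c d.edge) = (u, b), |w d.edge| := by
  have hcolor : ∑ d : G.Dart with (d.snd, c d.edge) = (u, true), |w d.edge| =
      ∑ d : G.Dart with (d.snd, c d.edge) = (u, false), |w d.edge| := by
    have hzero : ∑ d : G.Dart with d.snd = u, w d.edge = 0 :=
      (sum_darts_snd_eq_sum_neighborFinset w u).trans (hsum u)
    rw [← sum_filter_add_sum_filter_not _ (fun d : G.Dart => c d.edge), filter_filter,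
      filter_filter] at hzero
    have hred' : ∑ d : G.Dart with (d.snd, c d.edge) = (u, true), |w d.edge| =
        ∑ d : G.Dart with d.snd = u ∧ c d.edge, w d.edge :=
      sum_congr (by ext; simp) fun d hd =>
        abs_of_pos (hred _ d.edge_mem (mem_filter.1 hd).2.2)
    have hblue' : ∑ d : G.Dart with (d.snd, c d.edge) = (u, false), |w d.edge| =
        -∑ d : G.Dart with d.snd = u ∧ ¬c d.edge, w d.edge := by
      rw [← sum_neg_distrib]
      exact sum_congr (by ext; simp) fun d hd =>
        abs_of_neg (hblue _ d.edge_mem (Bool.of_not_eq_true (mem_filter.1 hd).2.2))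
    linarith
  rw [sum_darts_fst_not_eq_sum_darts_snd c (fun e => |w e|)]
  cases b
  exacts [hcolor.symm, hcolor]

end SimpleGraph

theorem every_edge_in_alternating_walk_of_weights_general [Fintype V]
    (G : SimpleGraph V) [DecidableRel G.Adj] (c : Sym2 V → Bool) (w : Sym2 V → ℝ)
    (hred : ∀ e ∈ G.edgeSet, c e = true → 0 < w e)
    (hblue : ∀ e ∈ G.edgeSet, c e = false → w e < 0)
    (hsum : ∀ v : V, ∑ u ∈ G.neighborFinset v, w s(u, v) = 0) :
    ∀ e ∈ G.edgeSet, ∃ (v : V) (p : G.Walk v v), CyclicAlt c p.edges ∧ e ∈ p.edges := by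
  classical
  intro e he
  induction e using Sym2.ind with | h x y => ?_
  let d₀ : G.Dart := ⟨(x, y), he⟩
  have hw : 0 < |w d₀.edge| := abs_pos.2 <| by
    cases hc : c d₀.edge
    exacts [(hblue _ he hc).ne, (hred _ he hc).ne']
  have hcycle := transGen_self_of_sum_fiber_eq (fun d : G.Dart => (d.snd, c d.edge))
    (fun d => (d.fst, !c d.edge)) (fun d => |w d.edge|) (fun _ => abs_nonneg _)
    (fun ⟨u, b⟩ => G.sum_abs_darts_snd_eq_sum_abs_darts_fst c w hred hblue hsum u b) hw
  exact ⟨x, SimpleGraph.exists_cyclicAlt_walk_of_transGen c hcycle⟩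

/-- If a finite red/blue-edge-colored graph admits a weight function
that is positive on red edges, negative on blue edges, and sums to `0` over the edges
incident to every vertex, then every edge belongs to a closed walk with alternating
colors. -/
theorem every_edge_in_alternating_walk_of_weights [Fintype V] [DecidableEq V]
    (G : SimpleGraph V) [DecidableRel G.Adj] (c : Sym2 V → Bool) (w : Sym2 V → ℝ)
    (hred : ∀ e ∈ G.edgeSet, c e = true → 0 < w e)
    (hblue : ∀ e ∈ G.edgeSet, c e = false → w e < 0)
    (hsum : ∀ v : V, ∑ u ∈ G.neighborFinset v, w s(u, v) = 0) :
    ∀ e ∈ G.edgeSet, ∃ (v : V) (p : G.Walk v v), CyclicAlt c p.edges ∧ e ∈ p.edges :=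
  every_edge_in_alternating_walk_of_weights_general G c w hred hblue hsum
end

section
/- Let θ be a weight function on the edges of a finite graph, negative on blue edges and positive on red edges, whose red edges form two disjoint clusters and whose blue edges join the clusters, such that the weights at each vertex sum to 0 and the sum of all negative weights equals −2ω with ω < π. Then every individual negative weight is at least −ω. -/
/-! Let `uv` be a blue edge with `u` in cluster `b`. Summing the vertex conditions over cluster `b`
counts every red edge of that cluster twice and every blue edge once, so the red weight of
cluster `b` is exactly `ω`. The red edges at `u` carry part of it, and the blue edges at `u` other
than `uv` are negative, so the vertex condition at `u` gives `0 ≤ ω + θ(uv)`. -/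

variable {V : Type*}

/-- Whether an edge is "blue", i.e. joins the two clusters of the 2-coloring `S` of the
vertices. -/
def isCross (S : V → Bool) : Sym2 V → Bool :=
  Sym2.lift ⟨fun u v => xor (S u) (S v), fun u v => Bool.xor_comm _ _⟩

open Finset SimpleGraph

namespace SimpleGraph

variable {M : Type*} [Fintype V] (G : SimpleGraph V) [DecidableRel G.Adj]

theorem sum_dart_eq_sum_sum_neighborFinset [AddCommMonoid M] (g : V → V → M) :
    ∑ d : G.Dart, g d.fst d.snd = ∑ x, ∑ w ∈ G.neighborFinset x, g x w := by
  rw [← sum_finset_product' (univ.filter fun p : V × V => G.Adj p.1 p.2) _ _ (by simp)]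
  exact sum_bij' (fun d _ => d.toProd) (fun p hp => ⟨p, (mem_filter.1 hp).2⟩)
    (by simp) (by simp) (by simp) (by simp) (by simp)

theorem sum_dart_eq_sum_edgeFinset [DecidableEq V] [AddCommMonoid M] (g : V → V → M) :
    ∑ d : G.Dart, g d.fst d.snd =
      ∑ e ∈ G.edgeFinset, Sym2.lift ⟨fun x w => g x w + g w x, fun _ _ => add_comm _ _⟩ e := by
  rw [← sum_fiberwise_of_maps_to (g := Dart.edge) (t := G.edgeFinset)
    (fun d _ => by simp [d.edge_mem])]
  refine sum_congr rfl fun e he => ?_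
  induction e using Sym2.ind with
  | _ x w =>
    let d : G.Dart := ⟨(x, w), by simpa using he⟩
    rw [show (univ.filter fun d' : G.Dart => d'.edge = s(x, w)) = {d, d.symm} from d.edge_fiber,
      sum_pair d.symm_ne.symm]
    rfl

theorem sum_sum_neighborFinset_eq_sum_edgeFinset [DecidableEq V] [AddCommMonoid M]
    (g : V → V → M) :
    ∑ x, ∑ w ∈ G.neighborFinset x, g x w =
      ∑ e ∈ G.edgeFinset, Sym2.lift ⟨fun x w => g x w + g w x, fun _ _ => add_comm _ _⟩ e :=
  (G.sum_dart_eq_sum_sum_neighborFinset g).symm.trans (G.sum_dart_eq_sum_edgeFinset g)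

theorem sum_neighborFinset_le_sum_edgeFinset [DecidableEq V] [AddCommMonoid M] [PartialOrder M]
    [IsOrderedAddMonoid M] (f : Sym2 V → M) (hf : ∀ e ∈ G.edgeFinset, 0 ≤ f e) (x : V) :
    ∑ w ∈ G.neighborFinset x, f s(x, w) ≤ ∑ e ∈ G.edgeFinset, f e := by
  rw [← sum_image fun _ _ _ _ => Sym2.congr_right.mp]
  refine sum_le_sum_of_subset_of_nonneg ?_ fun e he _ => hf e he
  rintro _ he
  obtain ⟨w, hw, rfl⟩ := mem_image.1 he
  simpa using hw

end SimpleGraph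

/-- The red weight of cluster `b`; `e.map S = s(b, b)` says that both ends of `e` have colour `b`. -/
def clusterWeight (S : V → Bool) (b : Bool) (θ : Sym2 V → ℝ) (e : Sym2 V) : ℝ :=
  if e.map S = s(b, b) then θ e else 0

theorem clusterWeight_mk (S : V → Bool) (b : Bool) (θ : Sym2 V → ℝ) (x w : V) :
    clusterWeight S b θ s(x, w) = if S x = b ∧ S w = b then θ s(x, w) else 0 := by
  simp [clusterWeight, Sym2.map_mk]

theorem ite_add_ite_eq_two_mul_clusterWeight_add_ite (S : V → Bool) (θ : Sym2 V → ℝ) (b : Bool)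
    (x w : V) :
    (if S x = b then θ s(w, x) else 0) + (if S w = b then θ s(x, w) else 0) =
      2 * clusterWeight S b θ s(x, w) + (if isCross S s(x, w) then θ s(x, w) else 0) := by
  rw [Sym2.eq_swap, clusterWeight_mk]
  simp only [isCross, Sym2.lift_mk]
  rcases Bool.eq_false_or_eq_true (S x) with hx | hx <;>
    rcases Bool.eq_false_or_eq_true (S w) with hw | hw <;>
    rcases Bool.eq_false_or_eq_true b with hb | hb <;>
    simp [hx, hw, hb] <;> ring

theorem sum_vertex_sums_of_cluster [Fintype V] [DecidableEq V] (G : SimpleGraph V)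
    [DecidableRel G.Adj] (S : V → Bool) (θ : Sym2 V → ℝ) (b : Bool) :
    ∑ x with S x = b, ∑ w ∈ G.neighborFinset x, θ s(w, x) =
      2 * ∑ e ∈ G.edgeFinset, clusterWeight S b θ e +
        ∑ e ∈ G.edgeFinset, (if isCross S e then θ e else 0) := by
  simp only [sum_filter, ite_sum_zero]
  rw [sum_sum_neighborFinset_eq_sum_edgeFinset, mul_sum, ← sum_add_distrib]
  refine sum_congr rfl fun e _ => ?_
  induction e using Sym2.ind with
  | _ x w => exact ite_add_ite_eq_two_mul_clusterWeight_add_ite S θ b x w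

theorem clusterWeight_nonneg (G : SimpleGraph V) (S : V → Bool) (θ : Sym2 V → ℝ) (b : Bool)
    (hred : ∀ u v, G.Adj u v → S u = S v → 0 < θ s(u, v)) :
    ∀ e ∈ G.edgeSet, 0 ≤ clusterWeight S b θ e := by
  intro e he
  induction e using Sym2.ind with
  | _ x w =>
    rw [clusterWeight_mk]
    split_ifs with h
    · exact (hred x w he (h.1.trans h.2.symm)).le
    · exact le_rfl

theorem sum_neighborFinset_le_sum_clusterWeight_add [Fintype V] (G : SimpleGraph V)
    [DecidableRel G.Adj] (S : V → Bool) (θ : Sym2 V → ℝ)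
    (hblue : ∀ u v, G.Adj u v → S u ≠ S v → θ s(u, v) < 0) {u v : V} (huv : G.Adj u v)
    (hne : S u ≠ S v) :
    ∑ w ∈ G.neighborFinset u, θ s(w, u) ≤
      ∑ w ∈ G.neighborFinset u, clusterWeight S (S u) θ s(u, w) + θ s(u, v) := by
  classical
  rw [← sum_ite_eq_of_mem' (G.neighborFinset u) v (fun _ => θ s(u, v)) (by simpa using huv),
    ← sum_add_distrib]
  refine sum_le_sum fun w hw => ?_
  rw [mem_neighborFinset] at hw
  rw [clusterWeight_mk, Sym2.eq_swap]
  by_cases hwv : w = v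
  · subst hwv
    simp [Ne.symm hne]
  · rw [if_neg hwv, add_zero]
    split_ifs with hw'
    · exact le_rfl
    · exact (hblue u w hw fun h => hw' ⟨rfl, h.symm⟩).le

theorem blue_weight_ge_neg_omega_general [Fintype V] [DecidableEq V]
    (G : SimpleGraph V) [DecidableRel G.Adj] (S : V → Bool) (θ : Sym2 V → ℝ) (ω : ℝ)
    (hred : ∀ u v, G.Adj u v → S u = S v → 0 < θ s(u, v))
    (hblue : ∀ u v, G.Adj u v → S u ≠ S v → θ s(u, v) < 0)
    (hsum : ∀ v : V, ∑ u ∈ G.neighborFinset v, θ s(u, v) = 0)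
    (hblueSum : ∑ e ∈ G.edgeFinset, (if isCross S e then θ e else 0) = -2 * ω) :
    ∀ u v, G.Adj u v → S u ≠ S v → -ω ≤ θ s(u, v) := by
  intro u v huv hne
  have hcluster : ∑ e ∈ G.edgeFinset, clusterWeight S (S u) θ e = ω := by
    have hsplit := sum_vertex_sums_of_cluster G S θ (S u)
    rw [sum_eq_zero fun x _ => hsum x, hblueSum] at hsplit
    linarith
  have hlocal : ∑ w ∈ G.neighborFinset u, clusterWeight S (S u) θ s(u, w) ≤ ω :=
    hcluster ▸ G.sum_neighborFinset_le_sum_edgeFinset _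
      (fun e he => clusterWeight_nonneg G S θ _ hred e (mem_edgeFinset.1 he)) u
  have hvertex := sum_neighborFinset_le_sum_clusterWeight_add G S θ hblue huv hne
  rw [hsum u] at hvertex
  linarith

/-- Let `θ` be a weight function on the edges of a finite graph whose
vertices are split into two clusters (by `S : V → Bool`), positive on red edges (edges
within a cluster), negative on blue edges (edges joining the clusters), such that the
weights at each vertex sum to `0` and the sum over all blue edges equals `-2ω` with
`ω < π`.  Then every individual blue weight is at least `-ω`. -/
theorem blue_weight_ge_neg_omega [Fintype V] [DecidableEq V]
    (G : SimpleGraph V) [DecidableRel G.Adj] (S : V → Bool) (θ : Sym2 V → ℝ) (ω : ℝ)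
    (hred : ∀ u v, G.Adj u v → S u = S v → 0 < θ s(u, v))
    (hblue : ∀ u v, G.Adj u v → S u ≠ S v → θ s(u, v) < 0)
    (hsum : ∀ v : V, ∑ u ∈ G.neighborFinset v, θ s(u, v) = 0)
    (hblueSum : ∑ e ∈ G.edgeFinset, (if isCross S e then θ e else 0) = -2 * ω)
    (hω : ω < Real.pi) :
    ∀ u v, G.Adj u v → S u ≠ S v → -ω ≤ θ s(u, v) :=
  blue_weight_ge_neg_omega_general G S θ ω hred hblue hsum hblueSum
end
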